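/- arXiv:1303.7048 — 5 statements merged into one kernel-verified Lean document; each statement's English description precedes it below -/
import Mathlib

section
/- Let w(t) = 1 + Σ_{j=1}^{M₀} (c_j cos(2πjt) + d_j sin(2πjt)) be a real trigonometric polynomial satisfying w(t) > 0 for all t ∈ [0,1]. Then c_j² + d_j² ≤ 4 for each j = 1, …, M₀. -/
open Real Finset

section Helpers
open intervalIntegral

lemma intg_cos (n : ℤ) : ∫ t in (0:ℝ)..1, Real.cos (2*π*n*t) = if n = 0 then 1 else 0 := by
  rcases eq_or_ne n 0 with h | h
  · simp [h]
  · have hne : (2*π*(n:ℝ)) ≠ 0 := by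
      have h1 := Real.pi_ne_zero
      have h2 : (n:ℝ) ≠ 0 := Int.cast_ne_zero.mpr h
      positivity
    rw [intervalIntegral.integral_comp_mul_left (fun x => Real.cos x) hne]
    have : Real.sin (2*π*n) = 0 := by
      have := Real.sin_int_mul_pi (2*n)
      push_cast at this ⊢
      rw [show (2:ℝ)*π*n = 2*n*π by ring, this]
    simp [h, this, smul_eq_mul]

lemma intg_sin (n : ℤ) : ∫ t in (0:ℝ)..1, Real.sin (2*π*n*t) = 0 := by
  rcases eq_or_ne n 0 with h | h
  · simp [h]
  · have hne : (2*π*(n:ℝ)) ≠ 0 := by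
      have h1 := Real.pi_ne_zero
      have h2 : (n:ℝ) ≠ 0 := Int.cast_ne_zero.mpr h
      positivity
    rw [intervalIntegral.integral_comp_mul_left (fun x => Real.sin x) hne]
    have : Real.cos (2*π*n) = 1 := by
      have := Real.cos_int_mul_two_pi n
      rw [show (2:ℝ)*π*n = n*(2*π) by ring, this]
    simp [this, smul_eq_mul]

lemma ii (u : ℝ → ℝ) (hu : Continuous u) :
    IntervalIntegrable u MeasureTheory.volume 0 1 := hu.intervalIntegrable 0 1

lemma intg_cosn (k : ℕ) (hk : 1 ≤ k) : ∫ t in (0:ℝ)..1, Real.cos (2*π*k*t) = 0 := by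
  have := intg_cos (k:ℤ)
  have hne : (k:ℤ) ≠ 0 := by omega
  simp only [hne, if_false] at this
  · push_cast at this; exact this

lemma intg_sinn (k : ℕ) : ∫ t in (0:ℝ)..1, Real.sin (2*π*k*t) = 0 := by
  have := intg_sin (k:ℤ)
  push_cast at this; exact this

lemma intg_cc (k j : ℕ) (hk : 1 ≤ k) (hj : 1 ≤ j) :
    ∫ t in (0:ℝ)..1, Real.cos (2*π*k*t) * Real.cos (2*π*j*t)
      = if k = j then 1/2 else 0 := by
  set n₁ : ℤ := (k:ℤ) - j with hn₁
  set n₂ : ℤ := (k:ℤ) + j with hn₂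
  have expand : ∀ t : ℝ, Real.cos (2*π*k*t) * Real.cos (2*π*j*t)
      = (Real.cos (2*π*(n₁:ℝ)*t) + Real.cos (2*π*(n₂:ℝ)*t))/2 := by
    intro t
    rw [hn₁, hn₂]
    push_cast
    rw [show 2*π*((k:ℝ)-j)*t = 2*π*k*t - 2*π*j*t by ring,
        show 2*π*((k:ℝ)+j)*t = 2*π*k*t + 2*π*j*t by ring,
        Real.cos_sub, Real.cos_add]
    ring
  simp only [expand]
  rw [intervalIntegral.integral_div, intervalIntegral.integral_add (ii _ (by fun_prop)) (ii _ (by fun_prop)),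
      intg_cos n₁, intg_cos n₂]
  have h2 : ¬(n₂ = 0) := by rw [hn₂]; omega
  have h1 : (n₁ = 0) ↔ (k = j) := by rw [hn₁]; omega
  simp only [h2, if_false, h1]
  split <;> norm_num

lemma intg_ss (k j : ℕ) (hk : 1 ≤ k) (hj : 1 ≤ j) :
    ∫ t in (0:ℝ)..1, Real.sin (2*π*k*t) * Real.sin (2*π*j*t)
      = if k = j then 1/2 else 0 := by
  set n₁ : ℤ := (k:ℤ) - j with hn₁
  set n₂ : ℤ := (k:ℤ) + j with hn₂
  have expand : ∀ t : ℝ, Real.sin (2*π*k*t) * Real.sin (2*π*j*t)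
      = (Real.cos (2*π*(n₁:ℝ)*t) - Real.cos (2*π*(n₂:ℝ)*t))/2 := by
    intro t
    rw [hn₁, hn₂]
    push_cast
    rw [show 2*π*((k:ℝ)-j)*t = 2*π*k*t - 2*π*j*t by ring,
        show 2*π*((k:ℝ)+j)*t = 2*π*k*t + 2*π*j*t by ring,
        Real.cos_sub, Real.cos_add]
    ring
  simp only [expand]
  rw [intervalIntegral.integral_div, intervalIntegral.integral_sub (ii _ (by fun_prop)) (ii _ (by fun_prop)),
      intg_cos n₁, intg_cos n₂]
  have h2 : ¬(n₂ = 0) := by rw [hn₂]; omega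
  have h1 : (n₁ = 0) ↔ (k = j) := by rw [hn₁]; omega
  simp only [h2, if_false, h1]
  split <;> norm_num

lemma intg_sc (k j : ℕ) :
    ∫ t in (0:ℝ)..1, Real.sin (2*π*k*t) * Real.cos (2*π*j*t) = 0 := by
  set n₁ : ℤ := (k:ℤ) - j with hn₁
  set n₂ : ℤ := (k:ℤ) + j with hn₂
  have expand : ∀ t : ℝ, Real.sin (2*π*k*t) * Real.cos (2*π*j*t)
      = (Real.sin (2*π*(n₁:ℝ)*t) + Real.sin (2*π*(n₂:ℝ)*t))/2 := by
    intro t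
    rw [hn₁, hn₂]
    push_cast
    rw [show 2*π*((k:ℝ)-j)*t = 2*π*k*t - 2*π*j*t by ring,
        show 2*π*((k:ℝ)+j)*t = 2*π*k*t + 2*π*j*t by ring,
        Real.sin_sub, Real.sin_add]
    ring
  simp only [expand]
  rw [intervalIntegral.integral_div, intervalIntegral.integral_add (ii _ (by fun_prop)) (ii _ (by fun_prop)),
      intg_sin n₁, intg_sin n₂]
  norm_num

lemma intg_cs (k j : ℕ) :
    ∫ t in (0:ℝ)..1, Real.cos (2*π*k*t) * Real.sin (2*π*j*t) = 0 := by
  have h := intg_sc j k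
  simp only [mul_comm] at h ⊢
  exact h

lemma intg_lin (k : ℕ) (hk : 1 ≤ k) (a b : ℝ) :
    ∫ t in (0:ℝ)..1, (a * Real.cos (2*π*k*t) + b * Real.sin (2*π*k*t)) = 0 := by
  rw [intervalIntegral.integral_add (ii _ (by fun_prop)) (ii _ (by fun_prop)),
      intervalIntegral.integral_const_mul, intervalIntegral.integral_const_mul,
      intg_cosn k hk, intg_sinn k]
  ring

lemma intg_comb (k j : ℕ) (hk : 1 ≤ k) (hj : 1 ≤ j) (a b e f : ℝ) :
    ∫ t in (0:ℝ)..1, (a * Real.cos (2*π*k*t) + b * Real.sin (2*π*k*t)) *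
        (e * Real.cos (2*π*j*t) + f * Real.sin (2*π*j*t))
      = if k = j then (a*e + b*f)/2 else 0 := by
  have expand : ∀ t : ℝ, (a * Real.cos (2*π*k*t) + b * Real.sin (2*π*k*t)) *
        (e * Real.cos (2*π*j*t) + f * Real.sin (2*π*j*t))
      = (a*e) * (Real.cos (2*π*k*t) * Real.cos (2*π*j*t))
        + ((a*f) * (Real.cos (2*π*k*t) * Real.sin (2*π*j*t))
        + ((b*e) * (Real.sin (2*π*k*t) * Real.cos (2*π*j*t))
        + (b*f) * (Real.sin (2*π*k*t) * Real.sin (2*π*j*t)))) := by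
    intro t; ring
  simp only [expand]
  rw [intervalIntegral.integral_add (ii _ (by fun_prop)) (ii _ (by fun_prop)),
      intervalIntegral.integral_add (ii _ (by fun_prop)) (ii _ (by fun_prop)),
      intervalIntegral.integral_add (ii _ (by fun_prop)) (ii _ (by fun_prop)),
      intervalIntegral.integral_const_mul, intervalIntegral.integral_const_mul,
      intervalIntegral.integral_const_mul, intervalIntegral.integral_const_mul,
      intg_cc k j hk hj, intg_cs k j, intg_sc k j, intg_ss k j hk hj]
  split <;> ring


end Helpers

/-- If the trigonometric polynomial
`w(t) = 1 + Σ_{j=1}^{M₀} (c_j cos(2πjt) + d_j sin(2πjt))` satisfies `w > 0`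
on `[0,1]`, then `c_j² + d_j² ≤ 4` for each `j`. -/
theorem stmt_6 (M₀ : ℕ) (c d : ℕ → ℝ)
    (hpos : ∀ t ∈ Set.Icc (0:ℝ) 1,
      0 < 1 + ∑ j ∈ Finset.Icc 1 M₀,
        (c j * Real.cos (2 * π * j * t) + d j * Real.sin (2 * π * j * t)))
    (j : ℕ) (hj : j ∈ Finset.Icc 1 M₀) :
    c j ^ 2 + d j ^ 2 ≤ 4 := by
  have hj1 : 1 ≤ j := (Finset.mem_Icc.mp hj).1
  set s : ℝ := c j ^ 2 + d j ^ 2 with hs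
  set r : ℝ := Real.sqrt s with hr
  have hs0 : 0 ≤ s := by positivity
  have hr0 : 0 ≤ r := Real.sqrt_nonneg s
  have hr2 : r ^ 2 = s := Real.sq_sqrt hs0
  set g : ℝ → ℝ := fun t =>
    r - (c j * Real.cos (2 * π * j * t) + d j * Real.sin (2 * π * j * t)) with hg
  have hgnn : ∀ t : ℝ, 0 ≤ g t := by
    intro t
    have h1 := Real.sin_sq_add_cos_sq (2 * π * j * t)
    have hx2 : (c j * Real.cos (2 * π * j * t) + d j * Real.sin (2 * π * j * t)) ^ 2 ≤ s := by
      nlinarith [sq_nonneg (c j * Real.sin (2 * π * j * t) - d j * Real.cos (2 * π * j * t))]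
    simp only [hg]
    nlinarith [hx2, hr2, hr0]
  have hval : (∫ t in (0:ℝ)..1, (1 + ∑ k ∈ Finset.Icc 1 M₀,
        (c k * Real.cos (2 * π * k * t) + d k * Real.sin (2 * π * k * t))) * g t)
      = r - s / 2 := by
    have expand : ∀ t : ℝ, (1 + ∑ k ∈ Finset.Icc 1 M₀,
          (c k * Real.cos (2 * π * k * t) + d k * Real.sin (2 * π * k * t))) * g t
        = g t + ∑ k ∈ Finset.Icc 1 M₀,
          ((c k * Real.cos (2 * π * k * t) + d k * Real.sin (2 * π * k * t)) * g t) := by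
      intro t; rw [add_mul, one_mul, Finset.sum_mul]
    simp only [expand]
    have hgc : Continuous g := by rw [hg]; fun_prop
    rw [intervalIntegral.integral_add (ii _ hgc)
        (ii _ (continuous_finset_sum _ (fun k _ => by fun_prop))),
      intervalIntegral.integral_finset_sum (fun k _ => ii _ (by fun_prop))]
    have hgval : (∫ t in (0:ℝ)..1, g t) = r := by
      simp only [hg]
      rw [intervalIntegral.integral_sub (ii _ (by fun_prop)) (ii _ (by fun_prop)),
        intervalIntegral.integral_const, intg_lin j hj1]
      simp
    have hterm : ∀ k ∈ Finset.Icc 1 M₀,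
        (∫ t in (0:ℝ)..1, (c k * Real.cos (2 * π * k * t) + d k * Real.sin (2 * π * k * t)) * g t)
          = if k = j then -(s/2) else 0 := by
      intro k hk
      have hk1 : 1 ≤ k := (Finset.mem_Icc.mp hk).1
      have e : ∀ t : ℝ, (c k * Real.cos (2 * π * k * t) + d k * Real.sin (2 * π * k * t)) * g t
          = r * (c k * Real.cos (2 * π * k * t) + d k * Real.sin (2 * π * k * t))
            - (c k * Real.cos (2 * π * k * t) + d k * Real.sin (2 * π * k * t)) *
              (c j * Real.cos (2 * π * j * t) + d j * Real.sin (2 * π * j * t)) := by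
        intro t; simp only [hg]; ring
      simp only [e]
      rw [intervalIntegral.integral_sub (ii _ (by fun_prop)) (ii _ (by fun_prop)),
        intervalIntegral.integral_const_mul, intg_lin k hk1, intg_comb k j hk1 hj1]
      rcases eq_or_ne k j with h | h
      · simp only [h, if_true, hs]; ring
      · simp [h]
    rw [hgval, Finset.sum_congr rfl hterm, Finset.sum_ite_eq' (Finset.Icc 1 M₀) j
        (fun _ => -(s/2)), if_pos hj]
    ring
  have hnn : 0 ≤ ∫ t in (0:ℝ)..1, (1 + ∑ k ∈ Finset.Icc 1 M₀,
        (c k * Real.cos (2 * π * k * t) + d k * Real.sin (2 * π * k * t))) * g t := by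
    apply intervalIntegral.integral_nonneg (by norm_num)
    intro t ht
    exact mul_nonneg (hpos t ht).le (hgnn t)
  rw [hval] at hnn
  nlinarith [hnn, hr2, hr0]
end

section
/- Let W = {φ ∈ C^∞[0,1] : φ(0)=0, φ(1)=1, φ' is a trigonometric polynomial of degree ≤ M₀, φ' > 0 on [0,1]}. For any r > 0 there exists a finite subset A_r ⊂ W with cardinality |A_r| ≤ (16πM₀²/r + 1)^{2M₀} such that for every ψ ∈ W there exists φ ∈ A_r with ‖ψ' − φ'‖_∞ ≤ r and ‖ψ − φ‖_∞ ≤ r. -/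
open Real Finset

/-- The class `W` of smooth maps `φ : [0,1] → ℝ` with `φ(0)=0`, `φ(1)=1`,
`φ'` a real trigonometric polynomial of degree at most `M₀`, and `φ' > 0`. -/
def phaseClass (M₀ : ℕ) : Set (ℝ → ℝ) :=
  {φ | ContDiff ℝ (⊤ : ℕ∞) φ ∧ φ 0 = 0 ∧ φ 1 = 1 ∧
    (∃ c₀ : ℝ, ∃ c d : ℕ → ℝ, ∀ t : ℝ,
      deriv φ t = c₀ + ∑ j ∈ Finset.Icc 1 M₀,
        (c j * Real.cos (2 * π * j * t) + d j * Real.sin (2 * π * j * t))) ∧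
    ∀ t ∈ Set.Icc (0:ℝ) 1, 0 < deriv φ t}


section helperLemmas
open intervalIntegral MeasureTheory


lemma int_cos_ne (a : ℝ) (ha : a ≠ 0) :
    ∫ t in (0:ℝ)..1, Real.cos (a * t) = Real.sin a / a := by
  have h := mul_integral_comp_mul_left (a := (0:ℝ)) (b := 1) (f := Real.cos) (c := a)
  rw [integral_cos] at h
  simp only [mul_one, mul_zero, Real.sin_zero, sub_zero] at h
  rw [eq_div_iff ha]
  linarith [h]

lemma int_sin_ne (a : ℝ) (ha : a ≠ 0) :
    ∫ t in (0:ℝ)..1, Real.sin (a * t) = (1 - Real.cos a) / a := by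
  have h := mul_integral_comp_mul_left (a := (0:ℝ)) (b := 1) (f := Real.sin) (c := a)
  rw [integral_sin] at h
  simp only [mul_one, mul_zero, Real.cos_zero] at h
  rw [eq_div_iff ha]
  linarith [h]

lemma int_cos_int (m : ℤ) :
    ∫ t in (0:ℝ)..1, Real.cos (2 * π * m * t) = if m = 0 then 1 else 0 := by
  rcases eq_or_ne m 0 with hm | hm
  · simp [hm]
  · have hm' : (m:ℝ) ≠ 0 := Int.cast_ne_zero.mpr hm
    have ha : 2 * π * (m:ℝ) ≠ 0 := by
      have := Real.pi_ne_zero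
      positivity
    rw [if_neg hm, int_cos_ne _ ha,
      show 2 * π * (m:ℝ) = ((2*m : ℤ):ℝ) * π by push_cast; ring,
      Real.sin_int_mul_pi, zero_div]

lemma int_sin_int (m : ℤ) :
    ∫ t in (0:ℝ)..1, Real.sin (2 * π * m * t) = 0 := by
  rcases eq_or_ne m 0 with hm | hm
  · simp [hm]
  · have hm' : (m:ℝ) ≠ 0 := Int.cast_ne_zero.mpr hm
    have ha : 2 * π * (m:ℝ) ≠ 0 := by
      have := Real.pi_ne_zero
      positivity
    rw [int_sin_ne _ ha,
      show 2 * π * (m:ℝ) = ((m : ℤ):ℝ) * (2 * π) by ring,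
      Real.cos_int_mul_two_pi, sub_self, zero_div]


lemma int_cos_nat (k : ℕ) (hk : k ≠ 0) :
    ∫ t in (0:ℝ)..1, Real.cos (2 * π * k * t) = 0 := by
  have h := int_cos_int (k : ℤ)
  rw [if_neg (by exact_mod_cast hk)] at h
  push_cast at h
  exact h

lemma int_sin_nat (k : ℕ) :
    ∫ t in (0:ℝ)..1, Real.sin (2 * π * k * t) = 0 := by
  have h := int_sin_int (k : ℤ)
  push_cast at h
  exact h

lemma int_cos_cos (k j : ℕ) (hk : 1 ≤ k) :
    ∫ t in (0:ℝ)..1, Real.cos (2 * π * k * t) * Real.cos (2 * π * j * t)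
      = if k = j then 1/2 else 0 := by
  have key : ∀ t : ℝ, Real.cos (2 * π * k * t) * Real.cos (2 * π * j * t)
      = (Real.cos (2 * π * (((k:ℤ) - j : ℤ):ℝ) * t)
        + Real.cos (2 * π * (((k:ℤ) + j : ℤ):ℝ) * t)) / 2 := by
    intro t
    push_cast
    rw [show 2 * π * ((k:ℝ) - j) * t = 2 * π * k * t - 2 * π * j * t by ring,
        show 2 * π * ((k:ℝ) + j) * t = 2 * π * k * t + 2 * π * j * t by ring,
        Real.cos_sub, Real.cos_add]
    ring
  simp only [key]
  rw [intervalIntegral.integral_div,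
      intervalIntegral.integral_add ((by fun_prop : Continuous _).intervalIntegrable _ _)
        ((by fun_prop : Continuous _).intervalIntegrable _ _),
      int_cos_int, int_cos_int]
  have h2 : (k:ℤ) + j ≠ 0 := by omega
  rw [if_neg h2]
  by_cases h : k = j
  · rw [if_pos (by omega), if_pos h]; norm_num
  · rw [if_neg (by omega), if_neg h]; norm_num

lemma int_sin_cos (k j : ℕ) :
    ∫ t in (0:ℝ)..1, Real.sin (2 * π * k * t) * Real.cos (2 * π * j * t) = 0 := by
  have key : ∀ t : ℝ, Real.sin (2 * π * k * t) * Real.cos (2 * π * j * t)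
      = (Real.sin (2 * π * (((k:ℤ) + j : ℤ):ℝ) * t)
        + Real.sin (2 * π * (((k:ℤ) - j : ℤ):ℝ) * t)) / 2 := by
    intro t
    push_cast
    rw [show 2 * π * ((k:ℝ) + j) * t = 2 * π * k * t + 2 * π * j * t by ring,
        show 2 * π * ((k:ℝ) - j) * t = 2 * π * k * t - 2 * π * j * t by ring,
        Real.sin_add, Real.sin_sub]
    ring
  simp only [key]
  rw [intervalIntegral.integral_div,
      intervalIntegral.integral_add ((by fun_prop : Continuous _).intervalIntegrable _ _)
        ((by fun_prop : Continuous _).intervalIntegrable _ _),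
      int_sin_int, int_sin_int]
  norm_num

lemma int_cos_sin (k j : ℕ) :
    ∫ t in (0:ℝ)..1, Real.cos (2 * π * k * t) * Real.sin (2 * π * j * t) = 0 := by
  have key : ∀ t : ℝ, Real.cos (2 * π * k * t) * Real.sin (2 * π * j * t)
      = Real.sin (2 * π * j * t) * Real.cos (2 * π * k * t) := fun t => mul_comm _ _
  simp only [key]
  exact int_sin_cos j k

lemma int_sin_sin (k j : ℕ) (hk : 1 ≤ k) :
    ∫ t in (0:ℝ)..1, Real.sin (2 * π * k * t) * Real.sin (2 * π * j * t)
      = if k = j then 1/2 else 0 := by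
  have key : ∀ t : ℝ, Real.sin (2 * π * k * t) * Real.sin (2 * π * j * t)
      = (Real.cos (2 * π * (((k:ℤ) - j : ℤ):ℝ) * t)
        - Real.cos (2 * π * (((k:ℤ) + j : ℤ):ℝ) * t)) / 2 := by
    intro t
    push_cast
    rw [show 2 * π * ((k:ℝ) - j) * t = 2 * π * k * t - 2 * π * j * t by ring,
        show 2 * π * ((k:ℝ) + j) * t = 2 * π * k * t + 2 * π * j * t by ring,
        Real.cos_sub, Real.cos_add]
    ring
  simp only [key]
  rw [intervalIntegral.integral_div,
      intervalIntegral.integral_sub ((by fun_prop : Continuous _).intervalIntegrable _ _)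
        ((by fun_prop : Continuous _).intervalIntegrable _ _),
      int_cos_int, int_cos_int]
  have h2 : (k:ℤ) + j ≠ 0 := by omega
  rw [if_neg h2]
  by_cases h : k = j
  · rw [if_pos (by omega), if_pos h]; norm_num
  · rw [if_neg (by omega), if_neg h]; norm_num


lemma coeff_facts (M₀ : ℕ) (ψ : ℝ → ℝ) (hψ : ψ ∈ phaseClass M₀)
    (c₀ : ℝ) (c d : ℕ → ℝ)
    (hrep : ∀ t : ℝ, deriv ψ t = c₀ + ∑ j ∈ Finset.Icc 1 M₀,
        (c j * Real.cos (2 * π * j * t) + d j * Real.sin (2 * π * j * t))) :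
    c₀ = 1 ∧ ∀ j ∈ Finset.Icc 1 M₀, |c j| ≤ 2 ∧ |d j| ≤ 2 := by
  obtain ⟨hsm, h0, h1, -, hpos⟩ := hψ
  have hcont : Continuous (deriv ψ) := hsm.continuous_deriv (by simp)
  have hint : IntervalIntegrable (deriv ψ) volume 0 1 := hcont.intervalIntegrable _ _
  have total : ∫ t in (0:ℝ)..1, deriv ψ t = 1 := by
    rw [intervalIntegral.integral_deriv_eq_sub
        (fun x _ => (hsm.differentiable (by simp)).differentiableAt) hint, h1, h0, sub_zero]
  have hc0 : c₀ = 1 := by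
    rw [← total]
    simp only [hrep]
    rw [intervalIntegral.integral_add (intervalIntegrable_const)
        ((continuous_finset_sum _ fun k _ => by fun_prop).intervalIntegrable _ _),
      intervalIntegral.integral_const, smul_eq_mul, sub_zero, one_mul,
      intervalIntegral.integral_finset_sum
        (fun k _ => (by fun_prop : Continuous _).intervalIntegrable _ _)]
    have : ∀ k ∈ Finset.Icc 1 M₀,
        (∫ t in (0:ℝ)..1, (c k * Real.cos (2 * π * k * t) + d k * Real.sin (2 * π * k * t))) = 0 := by
      intro k hk
      have hk1 : k ≠ 0 := by have := (Finset.mem_Icc.mp hk).1; omega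
      rw [intervalIntegral.integral_add ((by fun_prop : Continuous _).intervalIntegrable _ _)
          ((by fun_prop : Continuous _).intervalIntegrable _ _),
        intervalIntegral.integral_const_mul, intervalIntegral.integral_const_mul,
        int_cos_nat k hk1, int_sin_nat k, mul_zero, mul_zero, add_zero]
    rw [Finset.sum_congr rfl this, Finset.sum_const, smul_zero, add_zero]
  subst hc0
  refine ⟨rfl, fun j hj => ?_⟩
  obtain ⟨hj1, hjM⟩ := Finset.mem_Icc.mp hj
  -- generic bound for any continuous trig weight  w with |w| ≤ 1
  have habs : ∀ w : ℝ → ℝ, Continuous w → (∀ x, |w x| ≤ 1) →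
      |∫ t in (0:ℝ)..1, deriv ψ t * w t| ≤ 1 := by
    intro w hw hw1
    calc |∫ t in (0:ℝ)..1, deriv ψ t * w t|
        ≤ ∫ t in (0:ℝ)..1, |deriv ψ t * w t| :=
          intervalIntegral.abs_integral_le_integral_abs zero_le_one
      _ ≤ ∫ t in (0:ℝ)..1, deriv ψ t := by
          apply intervalIntegral.integral_mono_on zero_le_one
            ((hcont.mul hw).abs.intervalIntegrable _ _) hint
          intro x hx
          rw [Pi.mul_apply, abs_mul]
          have h1' : 0 < deriv ψ x := hpos x hx
          calc |deriv ψ x| * |w x| ≤ |deriv ψ x| * 1 :=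
                mul_le_mul_of_nonneg_left (hw1 x) (abs_nonneg _)
            _ = deriv ψ x := by rw [mul_one, abs_of_pos h1']
      _ = 1 := total
  -- computation of the weighted integrals
  have hccomp : (∫ t in (0:ℝ)..1, deriv ψ t * Real.cos (2 * π * j * t)) = c j / 2 := by
    have expand : ∀ t : ℝ, deriv ψ t * Real.cos (2 * π * j * t)
        = Real.cos (2 * π * j * t) + ∑ k ∈ Finset.Icc 1 M₀,
            (c k * (Real.cos (2 * π * k * t) * Real.cos (2 * π * j * t))
              + d k * (Real.sin (2 * π * k * t) * Real.cos (2 * π * j * t))) := by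
      intro t
      rw [hrep t, add_mul, one_mul, Finset.sum_mul]
      congr 1
      exact Finset.sum_congr rfl fun k _ => by ring
    simp only [expand]
    rw [intervalIntegral.integral_add ((by fun_prop : Continuous _).intervalIntegrable _ _)
        ((continuous_finset_sum _ fun k _ => by fun_prop).intervalIntegrable _ _),
      int_cos_nat j (by omega), zero_add,
      intervalIntegral.integral_finset_sum
        (fun k _ => (by fun_prop : Continuous _).intervalIntegrable _ _)]
    have : ∀ k ∈ Finset.Icc 1 M₀,
        (∫ t in (0:ℝ)..1, (c k * (Real.cos (2 * π * k * t) * Real.cos (2 * π * j * t))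
          + d k * (Real.sin (2 * π * k * t) * Real.cos (2 * π * j * t))))
        = if k = j then c j / 2 else 0 := by
      intro k hk
      have hk1 : 1 ≤ k := (Finset.mem_Icc.mp hk).1
      rw [intervalIntegral.integral_add ((by fun_prop : Continuous _).intervalIntegrable _ _)
          ((by fun_prop : Continuous _).intervalIntegrable _ _),
        intervalIntegral.integral_const_mul, intervalIntegral.integral_const_mul,
        int_cos_cos k j hk1, int_sin_cos k j, mul_zero, add_zero]
      by_cases h : k = j
      · subst h; rw [if_pos rfl, if_pos rfl]; ring
      · rw [if_neg h, if_neg h, mul_zero]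
    rw [Finset.sum_congr rfl this, Finset.sum_ite_eq' (Finset.Icc 1 M₀) j, if_pos hj]
  have hdcomp : (∫ t in (0:ℝ)..1, deriv ψ t * Real.sin (2 * π * j * t)) = d j / 2 := by
    have expand : ∀ t : ℝ, deriv ψ t * Real.sin (2 * π * j * t)
        = Real.sin (2 * π * j * t) + ∑ k ∈ Finset.Icc 1 M₀,
            (c k * (Real.cos (2 * π * k * t) * Real.sin (2 * π * j * t))
              + d k * (Real.sin (2 * π * k * t) * Real.sin (2 * π * j * t))) := by
      intro t
      rw [hrep t, add_mul, one_mul, Finset.sum_mul]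
      congr 1
      exact Finset.sum_congr rfl fun k _ => by ring
    simp only [expand]
    rw [intervalIntegral.integral_add ((by fun_prop : Continuous _).intervalIntegrable _ _)
        ((continuous_finset_sum _ fun k _ => by fun_prop).intervalIntegrable _ _),
      int_sin_nat j, zero_add,
      intervalIntegral.integral_finset_sum
        (fun k _ => (by fun_prop : Continuous _).intervalIntegrable _ _)]
    have : ∀ k ∈ Finset.Icc 1 M₀,
        (∫ t in (0:ℝ)..1, (c k * (Real.cos (2 * π * k * t) * Real.sin (2 * π * j * t))
          + d k * (Real.sin (2 * π * k * t) * Real.sin (2 * π * j * t))))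
        = if k = j then d j / 2 else 0 := by
      intro k hk
      have hk1 : 1 ≤ k := (Finset.mem_Icc.mp hk).1
      rw [intervalIntegral.integral_add ((by fun_prop : Continuous _).intervalIntegrable _ _)
          ((by fun_prop : Continuous _).intervalIntegrable _ _),
        intervalIntegral.integral_const_mul, intervalIntegral.integral_const_mul,
        int_cos_sin k j, int_sin_sin k j hk1, mul_zero, zero_add]
      by_cases h : k = j
      · subst h; rw [if_pos rfl, if_pos rfl]; ring
      · rw [if_neg h, if_neg h, mul_zero]
    rw [Finset.sum_congr rfl this, Finset.sum_ite_eq' (Finset.Icc 1 M₀) j, if_pos hj]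
  constructor
  · have := habs (fun t => Real.cos (2 * π * j * t)) (by fun_prop)
      (fun x => Real.abs_cos_le_one _)
    rw [hccomp, abs_div] at this
    rw [show |(2:ℝ)| = 2 by norm_num] at this
    linarith [(abs_div (c j) 2).symm]
  · have := habs (fun t => Real.sin (2 * π * j * t)) (by fun_prop)
      (fun x => Real.abs_sin_le_one _)
    rw [hdcomp, abs_div] at this
    rw [show |(2:ℝ)| = 2 by norm_num] at this
    linarith


lemma id_mem_phaseClass (M₀ : ℕ) : (id : ℝ → ℝ) ∈ phaseClass M₀ := by
  refine ⟨contDiff_id, rfl, rfl, ⟨1, fun _ => 0, fun _ => 0, fun t => by simp⟩, fun t _ => by simp⟩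


end helperLemmas

/-- Covering lemma: for every `r > 0` there is a finite subset `A_r ⊆ W` of
cardinality at most `(16πM₀²/r + 1)^{2M₀}` that is an `r`-net for `W` in both
`‖ψ' − φ'‖_∞` and `‖ψ − φ‖_∞` on `[0,1]`. -/
theorem stmt_8 (M₀ : ℕ) (r : ℝ) (hr : 0 < r) :
    ∃ A : Finset (ℝ → ℝ),
      (↑A : Set (ℝ → ℝ)) ⊆ phaseClass M₀ ∧
      (A.card : ℝ) ≤ (16 * π * (M₀ : ℝ) ^ 2 / r + 1) ^ (2 * M₀) ∧
      ∀ ψ ∈ phaseClass M₀, ∃ φ ∈ A,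
        (∀ t ∈ Set.Icc (0:ℝ) 1, |deriv ψ t - deriv φ t| ≤ r) ∧
        (∀ t ∈ Set.Icc (0:ℝ) 1, |ψ t - φ t| ≤ r) := by
  classical
  have hπ : (0:ℝ) < π := Real.pi_pos
  set m : ℝ := max ((M₀:ℝ)^2) 1 with hm
  have hm1 : (1:ℝ) ≤ m := le_max_right _ _
  set h : ℝ := r / (4*π*m) with hh
  have hhpos : 0 < h := by
    apply div_pos hr
    positivity
  set B : ℤ := ⌊4/h⌋ with hB
  have hBnn : 0 ≤ B := Int.floor_nonneg.mpr (by positivity)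
  -- choose representations
  have hrepex : ∀ ψ : ℝ → ℝ, ∃ c₀ : ℝ, ∃ c d : ℕ → ℝ, ψ ∈ phaseClass M₀ →
      ∀ t : ℝ, deriv ψ t = c₀ + ∑ j ∈ Finset.Icc 1 M₀,
        (c j * Real.cos (2 * π * j * t) + d j * Real.sin (2 * π * j * t)) := by
    intro ψ
    by_cases hψ : ψ ∈ phaseClass M₀
    · obtain ⟨-, -, -, ⟨c₀, c, d, hc⟩, -⟩ := hψ
      exact ⟨c₀, c, d, fun _ => hc⟩
    · exact ⟨0, 0, 0, fun hmem => absurd hmem hψ⟩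
  choose c₀f cf df hf using hrepex
  set key : (ℝ → ℝ) → ({x // x ∈ Finset.Icc 1 M₀} → ℤ × ℤ) :=
    fun ψ j => (⌊(cf ψ j + 2)/h⌋, ⌊(df ψ j + 2)/h⌋) with hkey
  set g : ({x // x ∈ Finset.Icc 1 M₀} → ℤ × ℤ) → (ℝ → ℝ) := fun v =>
    if hv : ∃ ψ ∈ phaseClass M₀, key ψ = v then hv.choose else id with hg
  have hgW : ∀ v, g v ∈ phaseClass M₀ := by
    intro v
    rw [hg]
    dsimp only
    split_ifs with hv
    · exact hv.choose_spec.1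
    · exact id_mem_phaseClass M₀
  set S : Finset ({x // x ∈ Finset.Icc 1 M₀} → ℤ × ℤ) :=
    Fintype.piFinset (fun _ => Finset.Icc 0 B ×ˢ Finset.Icc 0 B) with hS
  refine ⟨S.image g, ?_, ?_, ?_⟩
  · intro f hf'
    obtain ⟨v, -, rfl⟩ := Finset.mem_image.mp hf'
    exact hgW v
  · -- cardinality
    have hcard : S.card = ((B+1).toNat * (B+1).toNat) ^ M₀ := by
      rw [hS, Fintype.card_piFinset, Finset.prod_const, Finset.card_product, Int.card_Icc,
        sub_zero]
      congr 1
      simp [Finset.card_univ, Fintype.card_coe, Nat.card_Icc]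
    have hcast : ((B+1).toNat : ℝ) = (B:ℝ) + 1 := by
      have h' : ((B+1).toNat : ℤ) = B + 1 := Int.toNat_of_nonneg (by omega)
      exact_mod_cast congrArg (Int.cast : ℤ → ℝ) h'
    have hcardR : ((S.image g).card : ℝ) ≤ ((B:ℝ)+1) ^ (2*M₀) := by
      calc ((S.image g).card : ℝ) ≤ (S.card : ℝ) := by
            exact_mod_cast Finset.card_image_le
        _ = ((B:ℝ)+1) ^ (2*M₀) := by
            rw [hcard]
            push_cast [hcast]
            rw [two_mul, pow_add, mul_pow]
    rcases Nat.eq_zero_or_pos M₀ with hM0 | hM0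
    · subst hM0
      rw [mul_zero, pow_zero] at hcardR ⊢
      exact hcardR.trans (by norm_num)
    · have hmm : m = (M₀:ℝ)^2 := by
        rw [hm, max_eq_left]
        have : (1:ℝ) ≤ (M₀:ℝ) := by exact_mod_cast hM0
        nlinarith
      have hbase : (B:ℝ) + 1 ≤ 16 * π * (M₀:ℝ)^2 / r + 1 := by
        have h1 : (B:ℝ) ≤ 4/h := Int.floor_le _
        have h2 : 4/h = 16 * π * (M₀:ℝ)^2 / r := by
          rw [hh, hmm]
          field_simp
          ring
        linarith
      refine hcardR.trans ?_
      apply pow_le_pow_left₀ (by positivity) hbase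
  · -- covering
    intro ψ hψ
    obtain ⟨hc₀ψ, hbψ⟩ := coeff_facts M₀ ψ hψ _ _ _ (hf ψ hψ)
    have hex : ∃ ψ' ∈ phaseClass M₀, key ψ' = key ψ := ⟨ψ, hψ, rfl⟩
    have hmemS : key ψ ∈ S := by
      rw [hS, Fintype.mem_piFinset]
      intro j
      obtain ⟨hc2, hd2⟩ := hbψ j j.2
      rw [Finset.mem_product, Finset.mem_Icc, Finset.mem_Icc]
      have hcl : |cf ψ j| ≤ 2 := hc2
      have hdl : |df ψ j| ≤ 2 := hd2
      rw [abs_le] at hcl hdl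
      constructor
      · constructor
        · exact Int.floor_nonneg.mpr (div_nonneg (by linarith) hhpos.le)
        · exact Int.floor_le_floor ((div_le_div_iff_of_pos_right hhpos).mpr (by linarith))
      · constructor
        · exact Int.floor_nonneg.mpr (div_nonneg (by linarith) hhpos.le)
        · exact Int.floor_le_floor ((div_le_div_iff_of_pos_right hhpos).mpr (by linarith))
    have hφdef : g (key ψ) = hex.choose := dif_pos hex
    obtain ⟨hφW, hkeyeq⟩ := hex.choose_spec
    rw [← hφdef] at hφW hkeyeq
    obtain ⟨hc₀φ, hbφ⟩ := coeff_facts M₀ _ hφW _ _ _ (hf _ hφW)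
    set φ : ℝ → ℝ := g (key ψ) with hφ
    have floor_close : ∀ a b : ℝ, ⌊(a+2)/h⌋ = ⌊(b+2)/h⌋ → |a - b| < h := by
      intro a b hab
      have h1 : |(a+2)/h - (b+2)/h| < 1 := Int.abs_sub_lt_one_of_floor_eq_floor hab
      rw [div_sub_div_same, show a + 2 - (b + 2) = a - b by ring, abs_div,
        abs_of_pos hhpos, div_lt_one hhpos] at h1
      exact h1
    have hclose : ∀ j ∈ Finset.Icc 1 M₀, |cf ψ j - cf φ j| < h ∧ |df ψ j - df φ j| < h := by
      intro j hj
      have h1 := congrFun hkeyeq ⟨j, hj⟩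
      rw [hkey] at h1
      simp only [Prod.mk.injEq] at h1
      exact ⟨floor_close _ _ h1.1.symm, floor_close _ _ h1.2.symm⟩
    have hderiv : ∀ t : ℝ, |deriv ψ t - deriv φ t| ≤ r := by
      intro t
      rw [hf ψ hψ t, hf φ hφW t, hc₀ψ, hc₀φ, add_sub_add_left_eq_sub,
        ← Finset.sum_sub_distrib]
      have hstep : ∀ j ∈ Finset.Icc 1 M₀,
          |(cf ψ j * Real.cos (2*π*j*t) + df ψ j * Real.sin (2*π*j*t))
            - (cf φ j * Real.cos (2*π*j*t) + df φ j * Real.sin (2*π*j*t))| ≤ 2*h := by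
        intro j hj
        obtain ⟨hcc, hdd⟩ := hclose j hj
        calc |(cf ψ j * Real.cos (2*π*j*t) + df ψ j * Real.sin (2*π*j*t))
            - (cf φ j * Real.cos (2*π*j*t) + df φ j * Real.sin (2*π*j*t))|
            = |(cf ψ j - cf φ j) * Real.cos (2*π*j*t)
              + (df ψ j - df φ j) * Real.sin (2*π*j*t)| := by
              congr 1; ring
          _ ≤ |(cf ψ j - cf φ j) * Real.cos (2*π*j*t)|
              + |(df ψ j - df φ j) * Real.sin (2*π*j*t)| := abs_add_le _ _
          _ ≤ |cf ψ j - cf φ j| * 1 + |df ψ j - df φ j| * 1 := by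
              rw [abs_mul, abs_mul]
              gcongr
              · exact Real.abs_cos_le_one _
              · exact Real.abs_sin_le_one _
          _ ≤ 2*h := by rw [mul_one, mul_one]; linarith
      have hM : (M₀:ℝ) ≤ m := by
        rcases Nat.eq_zero_or_pos M₀ with h0 | h0
        · rw [h0]; exact le_trans (by norm_num) hm1
        · have h1' : (1:ℝ) ≤ (M₀:ℝ) := by exact_mod_cast h0
          calc (M₀:ℝ) ≤ (M₀:ℝ)^2 := by nlinarith
            _ ≤ m := le_max_left _ _
      have hπ3 : (3:ℝ) < π := Real.pi_gt_three
      have hmpos : (0:ℝ) < m := lt_of_lt_of_le one_pos hm1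
      calc |∑ j ∈ Finset.Icc 1 M₀, ((cf ψ j * Real.cos (2*π*j*t) + df ψ j * Real.sin (2*π*j*t))
            - (cf φ j * Real.cos (2*π*j*t) + df φ j * Real.sin (2*π*j*t)))|
          ≤ ∑ j ∈ Finset.Icc 1 M₀, |(cf ψ j * Real.cos (2*π*j*t) + df ψ j * Real.sin (2*π*j*t))
            - (cf φ j * Real.cos (2*π*j*t) + df φ j * Real.sin (2*π*j*t))| :=
            Finset.abs_sum_le_sum_abs _ _
        _ ≤ ∑ _j ∈ Finset.Icc 1 M₀, 2*h := Finset.sum_le_sum hstep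
        _ = (M₀:ℝ) * (2*h) := by
            rw [Finset.sum_const, Nat.card_Icc, nsmul_eq_mul]
            norm_num
        _ ≤ r := by
            rw [hh, show (M₀:ℝ) * (2*(r/(4*π*m))) = 2*(M₀:ℝ)*r/(4*π*m) by ring,
              div_le_iff₀ (by positivity)]
            nlinarith [mul_le_mul_of_nonneg_right hM hr.le, mul_pos hmpos hr]
    refine ⟨φ, Finset.mem_image_of_mem g hmemS, fun t _ => hderiv t, ?_⟩
    intro t ht
    obtain ⟨ht0, ht1⟩ := ht
    obtain ⟨hsmψ, h0ψ, -, -, -⟩ := hψ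
    obtain ⟨hsmφ, h0φ, -, -, -⟩ := hφW
    have hcψ : Continuous (deriv ψ) := hsmψ.continuous_deriv (by simp)
    have hcφ : Continuous (deriv φ) := hsmφ.continuous_deriv (by simp)
    have ftc : ∀ f : ℝ → ℝ, ContDiff ℝ (⊤ : ℕ∞) f → (∫ s in (0:ℝ)..t, deriv f s) = f t - f 0 := by
      intro f hf'
      exact intervalIntegral.integral_deriv_eq_sub
        (fun x _ => (hf'.differentiable (by simp)).differentiableAt)
        ((hf'.continuous_deriv (by simp)).intervalIntegrable _ _)
    have hsub : ψ t - φ t = ∫ s in (0:ℝ)..t, (deriv ψ s - deriv φ s) := by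
      rw [intervalIntegral.integral_sub (hcψ.intervalIntegrable _ _)
        (hcφ.intervalIntegrable _ _), ftc ψ hsmψ, ftc φ hsmφ, h0ψ, h0φ]
      ring
    rw [hsub]
    have hb := intervalIntegral.norm_integral_le_of_norm_le_const (a := (0:ℝ)) (b := t)
      (C := r) (f := fun s => deriv ψ s - deriv φ s)
      (fun x _ => by simpa using hderiv x)
    calc |∫ s in (0:ℝ)..t, (deriv ψ s - deriv φ s)|
        = ‖∫ s in (0:ℝ)..t, (deriv ψ s - deriv φ s)‖ := (Real.norm_eq_abs _).symm
      _ ≤ r * |t - 0| := hb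
      _ ≤ r * 1 := by
          rw [sub_zero]
          exact mul_le_mul_of_nonneg_left (abs_le.mpr ⟨by linarith, ht1⟩) hr.le
      _ = r := mul_one r
end

section
/- Let A, B be M×N complex matrices (M < N) with each column of A having unit ℓ² norm, and let ε = max_{i,j} |A_{ij} − B_{ij}|. Then for every subset T of columns with |T| ≤ S and every coefficient vector c supported on T, | ‖A_T c‖₂² − ‖B_T c‖₂² | ≤ (2ε√M + ε²M) S ‖c‖₂². -/
/-!
Write `D = A - B`. Entrywise `‖D i j‖ ≤ ε` gives `‖D_j‖₂ ≤ δ := ε√M` for every column, so with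
`Q = ∑_{j ∈ T} ‖c j‖` the triangle inequality yields `‖A c‖ ≤ Q` and `‖D c‖ ≤ δ Q`. Then
`|‖A c‖² - ‖B c‖²| ≤ ‖D c‖ (2‖A c‖ + ‖D c‖) ≤ (2δ + δ²) Q²`, and Cauchy–Schwarz bounds
`Q² ≤ |T| ∑ ‖c j‖²`.
-/

open Finset Matrix

theorem abs_sq_norm_sub_sq_norm_le {E : Type*} [SeminormedAddCommGroup E] (u v : E) :
    |‖u‖ ^ 2 - ‖v‖ ^ 2| ≤ ‖u - v‖ * (2 * ‖u‖ + ‖u - v‖) := by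
  have hdiff : |‖u‖ - ‖v‖| ≤ ‖u - v‖ := abs_norm_sub_norm_le u v
  have hsum : ‖u‖ + ‖v‖ ≤ 2 * ‖u‖ + ‖u - v‖ := by
    linarith [norm_le_norm_add_norm_sub' v u, norm_sub_rev u v]
  calc |‖u‖ ^ 2 - ‖v‖ ^ 2| = |‖u‖ - ‖v‖| * (‖u‖ + ‖v‖) := by
        rw [sq_sub_sq, abs_mul, abs_of_nonneg (by positivity : 0 ≤ ‖u‖ + ‖v‖), mul_comm]
    _ ≤ ‖u - v‖ * (2 * ‖u‖ + ‖u - v‖) := by gcongr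

section SumSmul

variable {ι 𝕜 E : Type*} [NormedField 𝕜] [SeminormedAddCommGroup E] [NormedSpace 𝕜 E]

theorem norm_sum_smul_le_mul_sum_norm (T : Finset ι) (c : ι → 𝕜) (x : ι → E) {r : ℝ}
    (hx : ∀ j ∈ T, ‖x j‖ ≤ r) : ‖∑ j ∈ T, c j • x j‖ ≤ r * ∑ j ∈ T, ‖c j‖ := by
  rw [mul_sum]
  refine (norm_sum_le _ _).trans (sum_le_sum fun j hj => ?_)
  rw [norm_smul, mul_comm]
  exact mul_le_mul_of_nonneg_right (hx j hj) (norm_nonneg _)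

theorem abs_sq_norm_sum_smul_sub_le (T : Finset ι) (c : ι → 𝕜) (a b : ι → E) {δ : ℝ}
    (hδ : 0 ≤ δ) (ha : ∀ j ∈ T, ‖a j‖ ≤ 1) (hab : ∀ j ∈ T, ‖a j - b j‖ ≤ δ) :
    |‖∑ j ∈ T, c j • a j‖ ^ 2 - ‖∑ j ∈ T, c j • b j‖ ^ 2| ≤
      (2 * δ + δ ^ 2) * #T * ∑ j ∈ T, ‖c j‖ ^ 2 := by
  set Q := ∑ j ∈ T, ‖c j‖
  have hu : ‖∑ j ∈ T, c j • a j‖ ≤ Q := by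
    simpa using norm_sum_smul_le_mul_sum_norm T c a ha
  have hd : ‖∑ j ∈ T, c j • a j - ∑ j ∈ T, c j • b j‖ ≤ δ * Q := by
    simpa only [← sum_sub_distrib, ← smul_sub] using norm_sum_smul_le_mul_sum_norm T c _ hab
  calc _ ≤ δ * Q * (2 * Q + δ * Q) := (abs_sq_norm_sub_sq_norm_le _ _).trans (by gcongr)
    _ = (2 * δ + δ ^ 2) * Q ^ 2 := by ring
    _ ≤ (2 * δ + δ ^ 2) * (#T * ∑ j ∈ T, ‖c j‖ ^ 2) := by
        gcongr
        exact sq_sum_le_card_mul_sum_sq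
    _ = _ := by ring

end SumSmul

theorem EuclideanSpace.norm_le_mul_sqrt_card {𝕜 ι : Type*} [RCLike 𝕜] [Fintype ι]
    (x : EuclideanSpace 𝕜 ι) {r : ℝ} (hr : 0 ≤ r) (hx : ∀ i, ‖x i‖ ≤ r) :
    ‖x‖ ≤ r * √(Fintype.card ι) := by
  rw [EuclideanSpace.norm_eq, ← Real.sqrt_sq hr, ← Real.sqrt_mul (sq_nonneg r)]
  gcongr
  calc ∑ i, ‖x i‖ ^ 2 ≤ ∑ _i : ι, r ^ 2 := sum_le_sum fun i _ => by gcongr; exact hx i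
    _ = _ := by simp [mul_comm]

namespace Matrix

variable {m n 𝕜 : Type*}

def euclideanCol (A : Matrix m n 𝕜) (j : n) : EuclideanSpace 𝕜 m :=
  WithLp.toLp 2 (Aᵀ j)

@[simp]
theorem euclideanCol_apply (A : Matrix m n 𝕜) (j : n) (i : m) : A.euclideanCol j i = A i j :=
  rfl

theorem norm_euclideanCol_sq [RCLike 𝕜] [Fintype m] (A : Matrix m n 𝕜) (j : n) :
    ‖A.euclideanCol j‖ ^ 2 = ∑ i, ‖A i j‖ ^ 2 :=
  EuclideanSpace.norm_sq_eq _

theorem sum_norm_mulVec_sq_eq [RCLike 𝕜] [Fintype m] [Fintype n] (A : Matrix m n 𝕜) (c : n → 𝕜) (T : Finset n)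
    (hc : ∀ j ∉ T, c j = 0) :
    ∑ i, ‖∑ j, A i j * c j‖ ^ 2 = ‖∑ j ∈ T, c j • A.euclideanCol j‖ ^ 2 := by
  rw [sum_subset (subset_univ T) fun j _ hj => by simp [hc j hj], EuclideanSpace.norm_sq_eq]
  simp [mul_comm]

end Matrix

/-- Perturbation bound for restricted quadratic forms: if the columns of `A`
have unit `ℓ²` norm and `‖A_{ij} − B_{ij}‖ ≤ ε` entrywise, then for every
column subset `T` with `|T| ≤ S` and every vector `c` supported on `T`,
`|‖A c‖² − ‖B c‖²| ≤ (2ε√M + ε²M) S ‖c‖²`. -/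
theorem stmt_10 (M N S : ℕ) (hMN : M < N)
    (A B : Matrix (Fin M) (Fin N) ℂ) (ε : ℝ)
    (hcol : ∀ j : Fin N, ∑ i : Fin M, ‖A i j‖ ^ 2 = 1)
    (hε : ∀ i : Fin M, ∀ j : Fin N, ‖A i j - B i j‖ ≤ ε)
    (T : Finset (Fin N)) (hT : T.card ≤ S)
    (c : Fin N → ℂ) (hc : ∀ j ∉ T, c j = 0) :
    |(∑ i : Fin M, ‖∑ j : Fin N, A i j * c j‖ ^ 2) -
      (∑ i : Fin M, ‖∑ j : Fin N, B i j * c j‖ ^ 2)| ≤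
      (2 * ε * Real.sqrt M + ε ^ 2 * M) * S * ∑ j : Fin N, ‖c j‖ ^ 2 := by
  have hε0 : 0 ≤ ε := by
    have hN : 0 < N := M.zero_le.trans_lt hMN
    rcases Nat.eq_zero_or_pos M with rfl | hM
    · simpa using hcol ⟨0, hN⟩
    · exact (norm_nonneg _).trans (hε ⟨0, hM⟩ ⟨0, hN⟩)
  have hcolA (j : Fin N) : ‖A.euclideanCol j‖ ≤ 1 := by
    rw [← sq_le_one_iff₀ (norm_nonneg _), norm_euclideanCol_sq, hcol j]
  have hcolD (j : Fin N) : ‖A.euclideanCol j - B.euclideanCol j‖ ≤ ε * √M := by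
    simpa using EuclideanSpace.norm_le_mul_sqrt_card _ hε0 fun i => (by simpa using hε i j :
      ‖(A.euclideanCol j - B.euclideanCol j) i‖ ≤ ε)
  rw [sum_norm_mulVec_sq_eq A c T hc, sum_norm_mulVec_sq_eq B c T hc]
  calc _ ≤ (2 * (ε * √M) + (ε * √M) ^ 2) * #T * ∑ j ∈ T, ‖c j‖ ^ 2 :=
        abs_sq_norm_sum_smul_sub_le T c _ _ (by positivity) (fun j _ => hcolA j)
          (fun j _ => hcolD j)
    _ ≤ (2 * (ε * √M) + (ε * √M) ^ 2) * S * ∑ j, ‖c j‖ ^ 2 := by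
        gcongr
        exact subset_univ T
    _ = _ := by rw [mul_pow, Real.sq_sqrt M.cast_nonneg]; ring
end

section
/- Let A, B be M×N matrices with M < N, the columns of A normalized to unit ℓ² norm, and ε = max_{i,j}|A_{ij} − B_{ij}|. Define for each S the restricted isometry constant δ_S(A) as the smallest δ such that (1−δ)‖c‖₂² ≤ ‖A_T c‖₂² ≤ (1+δ)‖c‖₂² for all column subsets T with |T| ≤ S and all coefficient vectors c supported on T. Then |δ_S(A) − δ_S(B)| ≤ (2ε√M + ε²M)S. -/
open Finset

/-- The `S`-restricted isometry constant of a matrix `A` (Candès–Tao):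
the smallest `δ ≥ 0` such that `(1−δ)‖c‖² ≤ ‖A_T c‖² ≤ (1+δ)‖c‖²` for all
column subsets `T` with `|T| ≤ S` and all vectors `c` supported on `T`. -/
noncomputable def ripConst {M N : ℕ} (A : Matrix (Fin M) (Fin N) ℂ) (S : ℕ) : ℝ :=
  sInf {δ : ℝ | 0 ≤ δ ∧
    ∀ T : Finset (Fin N), T.card ≤ S → ∀ c : Fin N → ℂ, (∀ j ∉ T, c j = 0) →
      (1 - δ) * ∑ j : Fin N, ‖c j‖ ^ 2 ≤ ∑ i : Fin M, ‖∑ j : Fin N, A i j * c j‖ ^ 2 ∧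
      ∑ i : Fin M, ‖∑ j : Fin N, A i j * c j‖ ^ 2 ≤ (1 + δ) * ∑ j : Fin N, ‖c j‖ ^ 2}



/-- Restricted sum to the support. -/
lemma sum_restrict {M N : ℕ} (A : Matrix (Fin M) (Fin N) ℂ) (T : Finset (Fin N))
    (c : Fin N → ℂ) (hc : ∀ j ∉ T, c j = 0) (i : Fin M) :
    ∑ j : Fin N, A i j * c j = ∑ j ∈ T, A i j * c j := by
  refine (Finset.sum_subset (Finset.subset_univ T) ?_).symm
  intro j _ hj
  rw [hc j hj, mul_zero]

lemma normA_bound {M N S : ℕ} (A : Matrix (Fin M) (Fin N) ℂ)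
    (hcol : ∀ j : Fin N, ∑ i : Fin M, ‖A i j‖ ^ 2 = 1)
    (T : Finset (Fin N)) (hT : T.card ≤ S) (c : Fin N → ℂ) (hc : ∀ j ∉ T, c j = 0) :
    ∑ i : Fin M, ‖∑ j : Fin N, A i j * c j‖ ^ 2 ≤ S * ∑ j : Fin N, ‖c j‖ ^ 2 := by
  have hcT : ∑ j ∈ T, ‖c j‖ ^ 2 ≤ ∑ j : Fin N, ‖c j‖ ^ 2 :=
    Finset.sum_le_sum_of_subset_of_nonneg (Finset.subset_univ T)
      (fun j _ _ => by positivity)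
  calc ∑ i : Fin M, ‖∑ j : Fin N, A i j * c j‖ ^ 2
      = ∑ i : Fin M, ‖∑ j ∈ T, A i j * c j‖ ^ 2 := by
        simp_rw [sum_restrict A T c hc]
    _ ≤ ∑ i : Fin M, (∑ j ∈ T, ‖A i j‖ * ‖c j‖) ^ 2 := by
        refine Finset.sum_le_sum fun i _ => ?_
        refine pow_le_pow_left₀ (norm_nonneg _) ?_ 2
        refine (norm_sum_le _ _).trans ?_
        refine Finset.sum_le_sum fun j _ => ?_
        rw [norm_mul]
    _ ≤ ∑ i : Fin M, (∑ j ∈ T, ‖A i j‖ ^ 2) * ∑ j ∈ T, ‖c j‖ ^ 2 := by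
        refine Finset.sum_le_sum fun i _ => ?_
        exact Finset.sum_mul_sq_le_sq_mul_sq T _ _
    _ = (∑ j ∈ T, ‖c j‖ ^ 2) * ∑ j ∈ T, ∑ i : Fin M, ‖A i j‖ ^ 2 := by
        rw [← Finset.sum_mul, mul_comm, Finset.sum_comm]
    _ = (∑ j ∈ T, ‖c j‖ ^ 2) * T.card := by
        have h : ∑ j ∈ T, ∑ i : Fin M, ‖A i j‖ ^ 2 = (T.card : ℝ) := by
          rw [Finset.sum_congr rfl fun j _ => hcol j]
          simp
        rw [h]
    _ ≤ (∑ j : Fin N, ‖c j‖ ^ 2) * S := by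
        refine mul_le_mul hcT (by exact_mod_cast hT) (by positivity) (by positivity)
    _ = S * ∑ j : Fin N, ‖c j‖ ^ 2 := mul_comm _ _

set_option maxHeartbeats 1000000 in
lemma quad_bound {M N S : ℕ} (A B : Matrix (Fin M) (Fin N) ℂ) (ε : ℝ) (hε0 : 0 ≤ ε)
    (hcol : ∀ j : Fin N, ∑ i : Fin M, ‖A i j‖ ^ 2 = 1)
    (hε : ∀ i : Fin M, ∀ j : Fin N, ‖A i j - B i j‖ ≤ ε)
    (T : Finset (Fin N)) (hT : T.card ≤ S) (c : Fin N → ℂ) (hc : ∀ j ∉ T, c j = 0) :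
    |∑ i : Fin M, ‖∑ j : Fin N, A i j * c j‖ ^ 2
      - ∑ i : Fin M, ‖∑ j : Fin N, B i j * c j‖ ^ 2|
      ≤ (2 * ε * Real.sqrt M + ε ^ 2 * M) * S * ∑ j : Fin N, ‖c j‖ ^ 2 := by
  set n2 : ℝ := ∑ j : Fin N, ‖c j‖ ^ 2 with hn2def
  have hn2 : 0 ≤ n2 := by positivity
  obtain ⟨u, hui⟩ : ∃ u : EuclideanSpace ℂ (Fin M), ∀ i, u i = ∑ j : Fin N, A i j * c j :=
    ⟨(WithLp.equiv 2 _).symm fun i => ∑ j : Fin N, A i j * c j, fun i => rfl⟩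
  obtain ⟨v, hvi⟩ : ∃ v : EuclideanSpace ℂ (Fin M), ∀ i, v i = ∑ j : Fin N, B i j * c j :=
    ⟨(WithLp.equiv 2 _).symm fun i => ∑ j : Fin N, B i j * c j, fun i => rfl⟩
  have hsub : ∀ i, (u - v) i = (∑ j : Fin N, A i j * c j) - ∑ j : Fin N, B i j * c j := by
    intro i
    have : (u - v) i = u i - v i := rfl
    rw [this, hui, hvi]
  have hunorm : ∑ i : Fin M, ‖∑ j : Fin N, A i j * c j‖ ^ 2 = ‖u‖ ^ 2 := by
    rw [EuclideanSpace.norm_eq, Real.sq_sqrt (by positivity)]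
    exact Finset.sum_congr rfl fun i _ => by rw [hui]
  have hvnorm : ∑ i : Fin M, ‖∑ j : Fin N, B i j * c j‖ ^ 2 = ‖v‖ ^ 2 := by
    rw [EuclideanSpace.norm_eq, Real.sq_sqrt (by positivity)]
    exact Finset.sum_congr rfl fun i _ => by rw [hvi]
  have hu2 : ‖u‖ ^ 2 ≤ S * n2 := by
    rw [← hunorm]; exact normA_bound A hcol T hT c hc
  -- bound on the difference
  have hcT1 : (∑ j ∈ T, ‖c j‖) ^ 2 ≤ S * n2 := by
    have := Finset.sum_mul_sq_le_sq_mul_sq T (fun _ => (1:ℝ)) (fun j => ‖c j‖)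
    simp only [one_pow, one_mul, Finset.sum_const, nsmul_eq_mul, mul_one] at this
    refine this.trans ?_
    refine mul_le_mul (by exact_mod_cast hT) ?_ (by positivity) (by positivity)
    exact Finset.sum_le_sum_of_subset_of_nonneg (Finset.subset_univ T)
      (fun j _ _ => by positivity)
  have hd2 : ‖u - v‖ ^ 2 ≤ ε ^ 2 * M * (S * n2) := by
    have h1 : ‖u - v‖ ^ 2 = ∑ i : Fin M, ‖(∑ j : Fin N, A i j * c j) - ∑ j : Fin N, B i j * c j‖ ^ 2 := by
      rw [EuclideanSpace.norm_eq, Real.sq_sqrt (by positivity)]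
      exact Finset.sum_congr rfl fun i _ => by rw [hsub]
    rw [h1]
    have hterm : ∀ i : Fin M,
        ‖(∑ j : Fin N, A i j * c j) - ∑ j : Fin N, B i j * c j‖ ^ 2 ≤ ε ^ 2 * (S * n2) := by
      intro i
      have e1 : (∑ j : Fin N, A i j * c j) - ∑ j : Fin N, B i j * c j
          = ∑ j ∈ T, (A i j - B i j) * c j := by
        rw [sum_restrict A T c hc, sum_restrict B T c hc, ← Finset.sum_sub_distrib]
        simp [sub_mul]
      rw [e1]
      have h2 : ‖∑ j ∈ T, (A i j - B i j) * c j‖ ≤ ε * ∑ j ∈ T, ‖c j‖ := by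
        refine (norm_sum_le _ _).trans ?_
        rw [Finset.mul_sum]
        refine Finset.sum_le_sum fun j _ => ?_
        rw [norm_mul]
        exact mul_le_mul_of_nonneg_right (hε i j) (norm_nonneg _)
      calc ‖∑ j ∈ T, (A i j - B i j) * c j‖ ^ 2
          ≤ (ε * ∑ j ∈ T, ‖c j‖) ^ 2 := pow_le_pow_left₀ (norm_nonneg _) h2 2
        _ = ε ^ 2 * (∑ j ∈ T, ‖c j‖) ^ 2 := by ring
        _ ≤ ε ^ 2 * (S * n2) := by
            exact mul_le_mul_of_nonneg_left hcT1 (by positivity)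
    calc ∑ i : Fin M, ‖(∑ j : Fin N, A i j * c j) - ∑ j : Fin N, B i j * c j‖ ^ 2
        ≤ ∑ _i : Fin M, ε ^ 2 * (S * n2) := Finset.sum_le_sum fun i _ => hterm i
      _ = ε ^ 2 * M * (S * n2) := by
          rw [Finset.sum_const]; simp; ring
  -- now combine
  have hM : (0:ℝ) ≤ Real.sqrt M := Real.sqrt_nonneg _
  have hsqM : Real.sqrt M ^ 2 = (M:ℝ) := Real.sq_sqrt (Nat.cast_nonneg M)
  have hduu : ‖u - v‖ * ‖u‖ ≤ ε * Real.sqrt M * (S * n2) := by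
    have hb : (0:ℝ) ≤ ε * Real.sqrt M * (S * n2) :=
      mul_nonneg (mul_nonneg hε0 hM) (mul_nonneg (Nat.cast_nonneg S) hn2)
    have hsq : (‖u - v‖ * ‖u‖) ^ 2 ≤ (ε * Real.sqrt M * (S * n2)) ^ 2 := by
      have : (‖u - v‖ * ‖u‖) ^ 2 = ‖u - v‖ ^ 2 * ‖u‖ ^ 2 := by ring
      rw [this]
      have hSn2 : (0:ℝ) ≤ (S:ℝ) * n2 := mul_nonneg (Nat.cast_nonneg S) hn2
      have h2 : ‖u - v‖ ^ 2 * ‖u‖ ^ 2 ≤ (ε ^ 2 * M * (S * n2)) * (S * n2) :=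
        mul_le_mul hd2 hu2 (sq_nonneg _)
          (mul_nonneg (mul_nonneg (sq_nonneg ε) (Nat.cast_nonneg M)) hSn2)
      refine h2.trans_eq ?_
      rw [mul_pow, mul_pow, hsqM]; ring
    exact (pow_le_pow_iff_left₀ (by positivity) hb two_ne_zero).mp hsq
  have htri : |‖u‖ - ‖v‖| ≤ ‖u - v‖ := abs_norm_sub_norm_le u v
  have hvu : ‖v‖ ≤ ‖u‖ + ‖u - v‖ := by
    have := norm_sub_norm_le v u
    rw [norm_sub_rev] at this
    linarith
  have key : |‖u‖ ^ 2 - ‖v‖ ^ 2| ≤ ‖u - v‖ * (‖u‖ + ‖v‖) := by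
    have e : ‖u‖ ^ 2 - ‖v‖ ^ 2 = (‖u‖ - ‖v‖) * (‖u‖ + ‖v‖) := by ring
    rw [e, abs_mul, abs_of_nonneg (by positivity : (0:ℝ) ≤ ‖u‖ + ‖v‖)]
    exact mul_le_mul_of_nonneg_right htri (by positivity)
  rw [hunorm, hvnorm]
  have h3 : ‖u - v‖ * (‖u‖ + ‖v‖) ≤ 2 * (‖u - v‖ * ‖u‖) + ‖u - v‖ ^ 2 := by
    nlinarith [norm_nonneg (u - v), norm_nonneg u, norm_nonneg v]
  calc |‖u‖ ^ 2 - ‖v‖ ^ 2| ≤ ‖u - v‖ * (‖u‖ + ‖v‖) := key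
    _ ≤ 2 * (‖u - v‖ * ‖u‖) + ‖u - v‖ ^ 2 := h3
    _ ≤ 2 * (ε * Real.sqrt M * (S * n2)) + ε ^ 2 * M * (S * n2) := by linarith
    _ = (2 * ε * Real.sqrt M + ε ^ 2 * M) * S * n2 := by ring


/-- Perturbation bound for restricted isometry constants:
`|δ_S(A) − δ_S(B)| ≤ (2ε√M + ε²M)S` where `ε` bounds the entrywise difference
and the columns of `A` are `ℓ²`-normalized. -/
theorem stmt_11 (M N S : ℕ) (hMN : M < N)
    (A B : Matrix (Fin M) (Fin N) ℂ) (ε : ℝ)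
    (hcol : ∀ j : Fin N, ∑ i : Fin M, ‖A i j‖ ^ 2 = 1)
    (hε : ∀ i : Fin M, ∀ j : Fin N, ‖A i j - B i j‖ ≤ ε) :
    |ripConst A S - ripConst B S| ≤ (2 * ε * Real.sqrt M + ε ^ 2 * M) * S := by
  rcases Nat.eq_zero_or_pos M with hM0 | hM
  · exfalso
    subst hM0
    have := hcol ⟨0, hMN⟩
    simpa using this
  have hε0 : 0 ≤ ε := le_trans (norm_nonneg _) (hε ⟨0, hM⟩ ⟨0, hM.trans hMN⟩)
  set K : ℝ := (2 * ε * Real.sqrt M + ε ^ 2 * M) * S with hK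
  have hK0 : 0 ≤ K := by positivity
  set SA := {δ : ℝ | 0 ≤ δ ∧
    ∀ T : Finset (Fin N), T.card ≤ S → ∀ c : Fin N → ℂ, (∀ j ∉ T, c j = 0) →
      (1 - δ) * ∑ j : Fin N, ‖c j‖ ^ 2 ≤ ∑ i : Fin M, ‖∑ j : Fin N, A i j * c j‖ ^ 2 ∧
      ∑ i : Fin M, ‖∑ j : Fin N, A i j * c j‖ ^ 2 ≤ (1 + δ) * ∑ j : Fin N, ‖c j‖ ^ 2} with hSA
  set SB := {δ : ℝ | 0 ≤ δ ∧
    ∀ T : Finset (Fin N), T.card ≤ S → ∀ c : Fin N → ℂ, (∀ j ∉ T, c j = 0) →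
      (1 - δ) * ∑ j : Fin N, ‖c j‖ ^ 2 ≤ ∑ i : Fin M, ‖∑ j : Fin N, B i j * c j‖ ^ 2 ∧
      ∑ i : Fin M, ‖∑ j : Fin N, B i j * c j‖ ^ 2 ≤ (1 + δ) * ∑ j : Fin N, ‖c j‖ ^ 2} with hSB
  have hrA : ripConst A S = sInf SA := rfl
  have hrB : ripConst B S = sInf SB := rfl
  have shiftAB : ∀ δ ∈ SA, δ + K ∈ SB := by
    intro δ hδ
    refine ⟨by linarith [hδ.1], fun T hT c hc => ?_⟩
    have hb := hδ.2 T hT c hc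
    have hq := abs_le.mp (quad_bound A B ε hε0 hcol hε T hT c hc)
    have hn2 : (0:ℝ) ≤ ∑ j : Fin N, ‖c j‖ ^ 2 := by positivity
    constructor <;> nlinarith [hb.1, hb.2, hq.1, hq.2]
  have shiftBA : ∀ δ ∈ SB, δ + K ∈ SA := by
    intro δ hδ
    refine ⟨by linarith [hδ.1], fun T hT c hc => ?_⟩
    have hb := hδ.2 T hT c hc
    have hq := abs_le.mp (quad_bound A B ε hε0 hcol hε T hT c hc)
    have hn2 : (0:ℝ) ≤ ∑ j : Fin N, ‖c j‖ ^ 2 := by positivity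
    constructor <;> nlinarith [hb.1, hb.2, hq.1, hq.2]
  have neA : SA.Nonempty := by
    refine ⟨(S : ℝ) + 1, by positivity, fun T hT c hc => ?_⟩
    have hn2 : (0:ℝ) ≤ ∑ j : Fin N, ‖c j‖ ^ 2 := by positivity
    have hub := normA_bound A hcol T hT c hc
    have hlb : (0:ℝ) ≤ ∑ i : Fin M, ‖∑ j : Fin N, A i j * c j‖ ^ 2 := by positivity
    constructor <;> nlinarith
  have neB : SB.Nonempty := ⟨_, shiftAB _ neA.choose_spec⟩
  have bddA : BddBelow SA := ⟨0, fun δ hδ => hδ.1⟩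
  have bddB : BddBelow SB := ⟨0, fun δ hδ => hδ.1⟩
  have h1 : sInf SB ≤ sInf SA + K := by
    have : sInf SB - K ≤ sInf SA := by
      refine le_csInf neA fun δ hδ => ?_
      have := csInf_le bddB (shiftAB δ hδ)
      linarith
    linarith
  have h2 : sInf SA ≤ sInf SB + K := by
    have : sInf SA - K ≤ sInf SB := by
      refine le_csInf neB fun δ hδ => ?_
      have := csInf_le bddA (shiftBA δ hδ)
      linarith
    linarith
  rw [hrA, hrB, abs_sub_le_iff]
  constructor <;> linarith
end

section
/- Let φ be smooth with φ' a trigonometric polynomial of degree ≤ M₀, φ(0)=0, φ(1)=1, φ' > 0, and suppose e^{i2πkφ(t)}e^{-i2πlt} extends 1-periodically. Then for each n ≥ 1 the Fourier coefficient d_l = ∫₀¹ e^{i2πkφ(t)} e^{-i2πlt} dt satisfies |d_l| ≤ |l|^{-n} · max_t |dⁿ(e^{i2πkφ})/dtⁿ|, and moreover max_t |dⁿ(e^{i2πkφ})/dtⁿ| ≤ C(n) Σ_{j=1}^{n} |k|^j M₀^{n−j} ‖𝓕(φ')‖₁^j for a constant C(n) depending only on n. -/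
open Real Finset Set

lemma norm_cexp_eq_one (z : ℂ) (x : ℝ) (h : z = (x:ℂ) * Complex.I) :
    ‖Complex.exp z‖ = 1 := by
  rw [h]
  simp [Complex.norm_exp_ofReal_mul_I x]

lemma hasDerivAt_cexp_real (a : ℂ) (t : ℝ) :
    HasDerivAt (fun s : ℝ => Complex.exp (a * s)) (a * Complex.exp (a * t)) t := by
  have h1 : HasDerivAt (fun z : ℂ => Complex.exp (a * z)) (a * Complex.exp (a * t)) (t : ℂ) := by
    simpa [mul_comm, Function.comp_def] using
      (Complex.hasDerivAt_exp (a * t)).comp (t : ℂ) ((hasDerivAt_id (t : ℂ)).const_mul a)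
  exact h1.comp_ofReal

lemma contDiff_cexp_real (a : ℂ) : ContDiff ℝ (⊤ : ℕ∞) (fun s : ℝ => Complex.exp (a * s)) :=
  (Complex.contDiff_exp (𝕜 := ℝ)).comp
    (contDiff_const.mul (Complex.ofRealCLM.contDiff (𝕜 := ℝ)))

lemma iteratedDeriv_sum_cexp (s : Finset ℤ) (c : ℤ → ℂ) (p : ℕ) :
    iteratedDeriv p (fun t : ℝ => ∑ j ∈ s, c j * Complex.exp (2*π*Complex.I*(j:ℂ)*(t:ℂ)))
      = fun t : ℝ => ∑ j ∈ s, (2*π*Complex.I*(j:ℂ))^p * (c j * Complex.exp (2*π*Complex.I*(j:ℂ)*(t:ℂ))) := by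
  induction p with
  | zero => funext t; simp
  | succ p ih =>
    rw [iteratedDeriv_succ, ih]
    funext t
    have h : HasDerivAt (fun t : ℝ => ∑ j ∈ s, (2*π*Complex.I*(j:ℂ))^p * (c j * Complex.exp (2*π*Complex.I*(j:ℂ)*(t:ℂ))))
        (∑ j ∈ s, (2*π*Complex.I*(j:ℂ))^(p+1) * (c j * Complex.exp (2*π*Complex.I*(j:ℂ)*(t:ℂ)))) t := by
      apply HasDerivAt.fun_sum
      intro j hj
      have h2 : HasDerivAt (fun t : ℝ => Complex.exp ((2*π*Complex.I*(j:ℂ)) * (t:ℂ)))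
          ((2*π*Complex.I*(j:ℂ)) * Complex.exp ((2*π*Complex.I*(j:ℂ)) * (t:ℂ))) t :=
        hasDerivAt_cexp_real _ t
      have h3 := (h2.const_mul (c j)).const_mul ((2*π*Complex.I*(j:ℂ))^p)
      convert h3 using 1
      · rfl
      ring
    rw [h.deriv]

lemma psi_bound (M₀ : ℕ) (c : ℤ → ℂ) (p : ℕ) (t : ℝ) :
    ‖iteratedDeriv p (fun t : ℝ => ∑ j ∈ Finset.Icc (-(M₀:ℤ)) (M₀:ℤ),
        c j * Complex.exp (2*π*Complex.I*(j:ℂ)*(t:ℂ))) t‖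
      ≤ (2*π*(M₀:ℝ))^p * ∑ j ∈ Finset.Icc (-(M₀:ℤ)) (M₀:ℤ), ‖c j‖ := by
  rw [iteratedDeriv_sum_cexp]
  refine le_trans (norm_sum_le _ _) ?_
  rw [Finset.mul_sum]
  refine Finset.sum_le_sum ?_
  intro j hj
  rw [Finset.mem_Icc] at hj
  have hjle : |(j:ℝ)| ≤ (M₀:ℝ) := by
    rw [abs_le]
    constructor
    · exact_mod_cast hj.1
    · exact_mod_cast hj.2
  have h1 : ‖Complex.exp (2*π*Complex.I*(j:ℂ)*(t:ℂ))‖ = 1 := by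
    apply norm_cexp_eq_one _ (2*π*j*t)
    push_cast
    ring
  have h2 : ‖(2*π*Complex.I*(j:ℂ))‖ = 2*π*|(j:ℝ)| := by
    simp [norm_mul, abs_of_pos Real.pi_pos]
  rw [norm_mul, norm_mul, norm_pow, h1, h2, mul_one]
  refine mul_le_mul_of_nonneg_right
    (pow_le_pow_left₀ (by positivity) (by nlinarith [Real.pi_pos]) p) (norm_nonneg _)

noncomputable def Caux : ℕ → ℝ
  | 0 => 1
  | (m+1) => 2^(m+1) * Caux m + 1

lemma Caux_pos (m : ℕ) : 0 < Caux m := by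
  induction m with
  | zero => norm_num [Caux]
  | succ m ih => have : (0:ℝ) < 2^(m+1) := by positivity
                 simp only [Caux]; nlinarith

lemma Caux_one_le (m : ℕ) : 1 ≤ Caux m := by
  induction m with
  | zero => norm_num [Caux]
  | succ m ih => have : (1:ℝ) ≤ 2^(m+1) := one_le_pow₀ (by norm_num)
                 simp only [Caux]; nlinarith

lemma Caux_mono : Monotone Caux := by
  apply monotone_nat_of_le_succ
  intro m
  have h1 := Caux_pos m
  have : (1:ℝ) ≤ 2^(m+1) := one_le_pow₀ (by norm_num)
  simp only [Caux]; nlinarith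

lemma iteratedDeriv_cconst_mul {f : ℝ → ℂ} (hf : ContDiff ℝ (⊤ : ℕ∞) f) (c : ℂ) (m : ℕ) (x : ℝ) :
    iteratedDeriv m (fun t => c * f t) x = c * iteratedDeriv m f x := by
  have := iteratedDerivWithin_const_smul (𝕜 := ℝ) (F := ℂ) (R := ℂ) (n := m)
    (Set.mem_univ x) uniqueDiffOn_univ c ((hf.of_le (by exact_mod_cast le_top)).contDiffWithinAt)
  simpa [iteratedDerivWithin_univ, smul_eq_mul] using this

lemma keyB {ψ F : ℝ → ℂ} (K' : ℂ) (A B : ℝ) (hA : 0 ≤ A) (hB : 0 ≤ B)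
    (hψ : ContDiff ℝ (⊤ : ℕ∞) ψ) (hF : ContDiff ℝ (⊤ : ℕ∞) F)
    (hψb : ∀ (p : ℕ) (t : ℝ), ‖iteratedDeriv p ψ t‖ ≤ B^p * A)
    (hFnorm : ∀ t, ‖F t‖ = 1)
    (hdF : deriv F = fun t => K' * (ψ t * F t)) :
    ∀ (m : ℕ) (t : ℝ), ‖iteratedDeriv (m+1) F t‖ ≤
      Caux (m+1) * (‖K'‖ * A) * (‖K'‖ * A + B)^m := by
  intro m
  induction m using Nat.strong_induction_on with
  | _ m IH =>
  intro t
  set K := ‖K'‖ with hK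
  have hK0 : 0 ≤ K := norm_nonneg _
  have hKAB : 0 ≤ K * A + B := by positivity
  -- rewrite the (m+1)-st derivative
  have h1 : iteratedDeriv (m+1) F t = K' * iteratedDeriv m (fun s => ψ s * F s) t := by
    rw [iteratedDeriv_succ', hdF]
    exact iteratedDeriv_cconst_mul (hψ.mul hF) K' m t
  rw [h1, norm_mul, ← hK]
  -- Leibniz
  have hleib : ‖iteratedDeriv m (fun s => ψ s * F s) t‖ ≤
      ∑ i ∈ Finset.range (m+1), (m.choose i : ℝ) * ‖iteratedDeriv i ψ t‖ *
        ‖iteratedDeriv (m-i) F t‖ := by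
    rw [← norm_iteratedFDeriv_eq_norm_iteratedDeriv]
    simp_rw [← norm_iteratedFDeriv_eq_norm_iteratedDeriv]
    exact norm_iteratedFDeriv_mul_le hψ hF t (by exact_mod_cast (le_top : (m:ℕ∞) ≤ ⊤))
  have hterm : ∀ i ∈ Finset.range (m+1),
      (m.choose i : ℝ) * ‖iteratedDeriv i ψ t‖ * ‖iteratedDeriv (m-i) F t‖ ≤
        (m.choose i : ℝ) * (Caux m * A * (K * A + B)^m) := by
    intro i hi
    rw [Finset.mem_range] at hi
    have hc0 : (0:ℝ) ≤ (m.choose i : ℝ) := Nat.cast_nonneg _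
    have hbound : ‖iteratedDeriv i ψ t‖ * ‖iteratedDeriv (m-i) F t‖ ≤
        Caux m * A * (K * A + B)^m := by
      rcases eq_or_lt_of_le (Nat.lt_succ_iff.mp hi) with he | hlt
      · -- i = m
        subst he
        have h2 : ‖iteratedDeriv (i - i) F t‖ = 1 := by
          simp [Nat.sub_self, hFnorm t]
        rw [h2, mul_one]
        calc ‖iteratedDeriv i ψ t‖ ≤ B^i * A := hψb i t
          _ ≤ (K*A+B)^i * A := by
              refine mul_le_mul_of_nonneg_right ?_ hA
              exact pow_le_pow_left₀ hB (by nlinarith) i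
          _ = 1 * ((K*A+B)^i * A) := by ring
          _ ≤ Caux i * ((K*A+B)^i * A) := by
              refine mul_le_mul_of_nonneg_right (Caux_one_le i) (by positivity)
          _ = Caux i * A * (K*A+B)^i := by ring
      · -- i < m
        have hmi : m - i - 1 + 1 = m - i := by omega
        have hIH := IH (m - i - 1) (by omega) t
        rw [hmi] at hIH
        set P := (K*A+B)^(m-i-1) with hP
        have hP0 : 0 ≤ P := by positivity
        have e1 : (K*A+B)^m = (K*A+B)^i * ((K*A+B) * P) := by
          rw [hP, ← pow_succ', ← pow_add]
          congr 1
          omega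
        have inner : B^i * ((K*A) * P) ≤ (K*A+B)^i * ((K*A+B) * P) := by
          refine mul_le_mul (pow_le_pow_left₀ hB (by nlinarith) i)
            (mul_le_mul_of_nonneg_right (by nlinarith [mul_nonneg hK0 hA]) hP0)
            (by positivity) (by positivity)
        have houter : Caux (m-i) * (B^i * ((K*A) * P)) ≤
            Caux m * ((K*A+B)^i * ((K*A+B) * P)) := by
          refine mul_le_mul (Caux_mono (by omega)) inner (by positivity) (Caux_pos m).le
        calc ‖iteratedDeriv i ψ t‖ * ‖iteratedDeriv (m-i) F t‖
            ≤ (B^i * A) * (Caux (m-i) * (K * A) * P) := by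
              refine mul_le_mul (hψb i t) hIH (norm_nonneg _) (by positivity)
          _ = A * (Caux (m-i) * (B^i * ((K*A) * P))) := by ring
          _ ≤ A * (Caux m * ((K*A+B)^i * ((K*A+B) * P))) :=
              mul_le_mul_of_nonneg_left houter hA
          _ = Caux m * A * ((K*A+B)^i * ((K*A+B) * P)) := by ring
          _ = Caux m * A * (K*A+B)^m := by rw [← e1]
    calc (m.choose i : ℝ) * ‖iteratedDeriv i ψ t‖ * ‖iteratedDeriv (m-i) F t‖
        = (m.choose i : ℝ) * (‖iteratedDeriv i ψ t‖ * ‖iteratedDeriv (m-i) F t‖) := by ring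
      _ ≤ (m.choose i : ℝ) * (Caux m * A * (K * A + B)^m) :=
          mul_le_mul_of_nonneg_left hbound hc0
  have hsum : ∑ i ∈ Finset.range (m+1), (m.choose i : ℝ) * ‖iteratedDeriv i ψ t‖ *
        ‖iteratedDeriv (m-i) F t‖ ≤ 2^m * (Caux m * A * (K * A + B)^m) := by
    calc _ ≤ ∑ i ∈ Finset.range (m+1), (m.choose i : ℝ) * (Caux m * A * (K * A + B)^m) :=
          Finset.sum_le_sum hterm
      _ = (∑ i ∈ Finset.range (m+1), (m.choose i : ℝ)) * (Caux m * A * (K * A + B)^m) := by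
          rw [Finset.sum_mul]
      _ = 2^m * (Caux m * A * (K * A + B)^m) := by
          norm_cast
          rw [Nat.sum_range_choose]
  calc K * ‖iteratedDeriv m (fun s => ψ s * F s) t‖
      ≤ K * (2^m * (Caux m * A * (K * A + B)^m)) :=
        mul_le_mul_of_nonneg_left (le_trans hleib hsum) hK0
    _ = (2^m * Caux m) * (K * A * (K * A + B)^m) := by ring
    _ ≤ Caux (m+1) * (K * A * (K * A + B)^m) := by
        refine mul_le_mul_of_nonneg_right ?_ (by positivity)
        have := Caux_pos m
        have h5 : (2:ℝ)^m ≤ 2^(m+1) := by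
          apply pow_le_pow_right₀ <;> norm_num
        simp only [Caux]
        nlinarith
    _ = Caux (m+1) * (K * A) * (K * A + B)^m := by ring

lemma partA (n : ℕ) (F : ℝ → ℂ) (hF : ContDiff ℝ (⊤ : ℕ∞) F) (hper : ∀ t, F (t+1) = F t)
    (l : ℤ) (hl : l ≠ 0) :
    ‖∫ t in (0:ℝ)..1, F t * Complex.exp (-(2 * π * Complex.I * (l:ℂ) * (t:ℂ)))‖ ≤
      ((|(l : ℝ)|) ^ n)⁻¹ *
        sSup ((fun t => ‖iteratedDeriv n F t‖) '' Set.Icc (0:ℝ) 1) := by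
  set a : ℂ := -(2 * π * Complex.I * (l:ℂ)) with ha
  set v : ℝ → ℂ := fun t => Complex.exp (a * t) with hv
  -- basic facts
  have hFc : ∀ m : ℕ, Continuous (iteratedDeriv m F) := fun m => hF.continuous_iteratedDeriv m (by exact_mod_cast le_top)
  have hFd : ∀ (m : ℕ) (x : ℝ), HasDerivAt (iteratedDeriv m F) (iteratedDeriv (m+1) F x) x := by
    intro m x
    rw [iteratedDeriv_succ]
    exact ((hF.differentiable_iteratedDeriv m (by exact_mod_cast ENat.coe_lt_top m)) x).hasDerivAt
  have hFper : ∀ m : ℕ, ∀ t, iteratedDeriv m F (t+1) = iteratedDeriv m F t := by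
    intro m
    induction m with
    | zero => simpa using hper
    | succ m ih =>
      intro t
      rw [iteratedDeriv_succ]
      have hg : (fun x => iteratedDeriv m F (x + 1)) = iteratedDeriv m F := funext ih
      calc deriv (iteratedDeriv m F) (t + 1)
          = deriv (fun x => iteratedDeriv m F (x + 1)) t := (deriv_comp_add_const _ _ _).symm
        _ = deriv (iteratedDeriv m F) t := by rw [hg]
  have hvd : ∀ x : ℝ, HasDerivAt v (a * v x) x := fun x => hasDerivAt_cexp_real a x
  have hv1 : v 1 = 1 := by
    have : a * ((1:ℝ):ℂ) = ((-l : ℤ):ℂ) * (2 * π * Complex.I) := by push_cast [ha]; ring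
    rw [hv]; simp only [this]
    exact Complex.exp_int_mul_two_pi_mul_I (-l)
  have hv0 : v 0 = 1 := by simp [hv]
  -- key induction
  have key : ∀ m : ℕ, (∫ t in (0:ℝ)..1, iteratedDeriv m F t * v t) =
      (2 * π * Complex.I * (l:ℂ))^m * ∫ t in (0:ℝ)..1, F t * v t := by
    intro m
    induction m with
    | zero => simp
    | succ m ih =>
      have hu : ∀ x ∈ Set.uIcc (0:ℝ) 1, HasDerivAt (iteratedDeriv m F) (iteratedDeriv (m+1) F x) x :=
        fun x _ => hFd m x
      have hvz : ∀ x ∈ Set.uIcc (0:ℝ) 1, HasDerivAt v (a * v x) x := fun x _ => hvd x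
      have hiu : IntervalIntegrable (iteratedDeriv (m+1) F) MeasureTheory.volume 0 1 :=
        (hFc (m+1)).intervalIntegrable _ _
      have hiv : IntervalIntegrable (fun x => a * v x) MeasureTheory.volume 0 1 :=
        (continuous_const.mul (Complex.continuous_exp.comp
          (continuous_const.mul Complex.continuous_ofReal))).intervalIntegrable _ _
      have hparts := intervalIntegral.integral_deriv_mul_eq_sub hu hvz hiu hiv
      have hbd : iteratedDeriv m F 1 * v 1 - iteratedDeriv m F 0 * v 0 = 0 := by
        have := hFper m 0
        simp only [zero_add] at this
        rw [this, hv1, hv0]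
        ring
      rw [hbd] at hparts
      have hsplit : (∫ t in (0:ℝ)..1, iteratedDeriv (m+1) F t * v t) =
          - ∫ t in (0:ℝ)..1, iteratedDeriv m F t * (a * v t) := by
        have hi1 : IntervalIntegrable (fun t => iteratedDeriv (m+1) F t * v t)
            MeasureTheory.volume 0 1 :=
          ((hFc (m+1)).mul (Complex.continuous_exp.comp
            (continuous_const.mul Complex.continuous_ofReal))).intervalIntegrable _ _
        have hi2 : IntervalIntegrable (fun t => iteratedDeriv m F t * (a * v t))
            MeasureTheory.volume 0 1 :=
          ((hFc m).mul (continuous_const.mul (Complex.continuous_exp.comp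
            (continuous_const.mul Complex.continuous_ofReal)))).intervalIntegrable _ _
        have hadd := intervalIntegral.integral_add hi1 hi2
        rw [hparts] at hadd
        exact eq_neg_of_add_eq_zero_left hadd.symm
      rw [hsplit]
      have : (∫ t in (0:ℝ)..1, iteratedDeriv m F t * (a * v t)) =
          a * ∫ t in (0:ℝ)..1, iteratedDeriv m F t * v t := by
        rw [← intervalIntegral.integral_const_mul]
        congr 1
        funext t
        ring
      rw [this, ih]
      rw [ha]
      ring
  -- sup bound
  set S := (fun t => ‖iteratedDeriv n F t‖) '' Set.Icc (0:ℝ) 1 with hS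
  have hSne : S.Nonempty := ⟨‖iteratedDeriv n F 0‖, ⟨0, by norm_num, rfl⟩⟩
  have hSbdd : BddAbove S := (isCompact_Icc.image (hFc n).norm).bddAbove
  have hSnn : 0 ≤ sSup S := le_csSup_of_le hSbdd ⟨0, by norm_num, rfl⟩ (norm_nonneg _)
  have hvnorm : ∀ t : ℝ, ‖v t‖ = 1 := by
    intro t
    have h2 : a * (t:ℂ) = ((-(2*π*l*t) : ℝ):ℂ) * Complex.I := by push_cast [ha]; ring
    rw [hv]; simp only [h2]
    simpa using Complex.norm_exp_ofReal_mul_I (-(2*π*l*t))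
  have hbound : ‖∫ t in (0:ℝ)..1, iteratedDeriv n F t * v t‖ ≤ sSup S := by
    have := intervalIntegral.norm_integral_le_of_norm_le_const
      (C := sSup S) (f := fun t => iteratedDeriv n F t * v t) (a := (0:ℝ)) (b := 1) ?_
    · simpa using this
    · intro x hx
      rw [Set.uIoc_of_le (by norm_num : (0:ℝ) ≤ 1)] at hx
      have hxI : x ∈ Set.Icc (0:ℝ) 1 := ⟨hx.1.le, hx.2⟩
      rw [norm_mul, hvnorm, mul_one]
      exact le_csSup hSbdd ⟨x, hxI, rfl⟩
  -- combine
  have hnorm_a : ‖(2 * π * Complex.I * (l:ℂ))^n‖ = (2*π*|(l:ℝ)|)^n := by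
    rw [norm_pow]
    congr 1
    simp [abs_of_pos Real.pi_pos]
  have hln : (0:ℝ) < |(l:ℝ)| := by
    simp only [abs_pos]
    exact_mod_cast hl
  have h2pl : (0:ℝ) < (2*π*|(l:ℝ)|)^n := by positivity
  have heq := key n
  have : (2*π*|(l:ℝ)|)^n * ‖∫ t in (0:ℝ)..1, F t * v t‖ ≤ sSup S := by
    rw [← hnorm_a, ← norm_mul, ← heq]
    exact hbound
  have hfin : ‖∫ t in (0:ℝ)..1, F t * v t‖ ≤ ((|(l:ℝ)|)^n)⁻¹ * sSup S := by
    have hpow : (0:ℝ) < |(l:ℝ)|^n := by positivity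
    have h1pi : (1:ℝ) ≤ (2*π)^n := one_le_pow₀ (by nlinarith [Real.pi_gt_three])
    have hX : (0:ℝ) ≤ ‖∫ t in (0:ℝ)..1, F t * v t‖ := norm_nonneg _
    have h2 : (2*π*|(l:ℝ)|)^n = (2*π)^n * |(l:ℝ)|^n := by rw [mul_pow]
    rw [h2] at this
    rw [inv_mul_eq_div, le_div_iff₀ hpow]
    nlinarith
  -- match integrand shape
  have hshape : (fun t : ℝ => F t * Complex.exp (-(2 * π * Complex.I * (l:ℂ) * (t:ℂ)))) =
      fun t : ℝ => F t * v t := by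
    funext t
    rw [hv, ha]
    congr 2
    ring
  rw [hshape]
  exact hfin

set_option maxHeartbeats 1000000 in
/-- Decay of the Fourier coefficients `d_l = ∫₀¹ e^{2πikφ(t)}e^{-2πilt}dt`:
`|d_l| ≤ |l|^{-n} max_t |dⁿ(e^{2πikφ})/dtⁿ|`, together with the derivative bound
`max_t |dⁿ(e^{2πikφ})/dtⁿ| ≤ C(n) Σ_{j=1}^n |k|^j M₀^{n−j} ‖𝓕(φ')‖₁^j` with a
constant `C(n)` depending only on `n`. -/
theorem stmt_16 (n : ℕ) (hn : 1 ≤ n) :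
    ∃ C : ℝ, 0 < C ∧
      ∀ (M₀ : ℕ) (k : ℤ) (φ : ℝ → ℝ) (c : ℤ → ℂ),
        ContDiff ℝ (⊤ : ℕ∞) φ → φ 0 = 0 → φ 1 = 1 →
        (∀ t : ℝ, φ (t + 1) = φ t + 1) →
        (∀ t ∈ Set.Icc (0:ℝ) 1, 0 < deriv φ t) →
        (∀ t : ℝ, ((deriv φ t : ℝ) : ℂ) =
          ∑ j ∈ Finset.Icc (-(M₀ : ℤ)) (M₀ : ℤ),
            c j * Complex.exp (2 * π * Complex.I * (j : ℂ) * (t : ℂ))) →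
        (∀ l : ℤ, l ≠ 0 →
          ‖∫ t in (0:ℝ)..1,
              Complex.exp (2 * π * Complex.I * (k : ℂ) * (φ t : ℂ)) *
                Complex.exp (-(2 * π * Complex.I * (l : ℂ) * (t : ℂ)))‖ ≤
            ((|(l : ℝ)|) ^ n)⁻¹ *
              sSup ((fun t => ‖iteratedDeriv n
                (fun s => Complex.exp (2 * π * Complex.I * (k : ℂ) * (φ s : ℂ))) t‖) ''
                Set.Icc (0:ℝ) 1)) ∧
        (∀ t ∈ Set.Icc (0:ℝ) 1,
          ‖iteratedDeriv n
              (fun s => Complex.exp (2 * π * Complex.I * (k : ℂ) * (φ s : ℂ))) t‖ ≤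
            C * ∑ j ∈ Finset.Icc 1 n,
              |(k : ℝ)| ^ j * (M₀ : ℝ) ^ (n - j) *
                (∑ m ∈ Finset.Icc (-(M₀ : ℤ)) (M₀ : ℤ), ‖c m‖) ^ j) := by
  obtain ⟨m, rfl⟩ : ∃ m, n = m + 1 := ⟨n - 1, by omega⟩
  refine ⟨Caux (m+1) * 2^(m+1) * (2*π)^(m+1), by have := Caux_pos (m+1); positivity, ?_⟩
  intro M₀ k φ c hφ h0 h1 hper hpos hc
  -- the inner phase and the function F
  have hgd : ∀ t : ℝ, HasDerivAt (fun s : ℝ => ((φ s : ℝ) : ℂ)) ((deriv φ t : ℝ) : ℂ) t :=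
    fun t => ((hφ.differentiable (by simp) t).hasDerivAt).ofReal_comp
  have hF : ContDiff ℝ (⊤ : ℕ∞) (fun s : ℝ => Complex.exp (2 * π * Complex.I * (k : ℂ) * (φ s : ℂ))) :=
    (Complex.contDiff_exp (𝕜 := ℝ)).comp
      (contDiff_const.mul ((Complex.ofRealCLM.contDiff (𝕜 := ℝ)).comp hφ))
  have hψ : ContDiff ℝ (⊤ : ℕ∞) (fun t : ℝ => ∑ j ∈ Finset.Icc (-(M₀:ℤ)) (M₀:ℤ),
      c j * Complex.exp (2*π*Complex.I*(j:ℂ)*(t:ℂ))) := by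
    apply ContDiff.sum
    intro j hj
    exact contDiff_const.mul (contDiff_cexp_real (2*π*Complex.I*(j:ℂ)))
  have hFper : ∀ t : ℝ, Complex.exp (2 * π * Complex.I * (k : ℂ) * (φ (t+1) : ℂ)) =
      Complex.exp (2 * π * Complex.I * (k : ℂ) * (φ t : ℂ)) := by
    intro t
    rw [hper t]
    push_cast
    rw [mul_add, Complex.exp_add, mul_one]
    have : Complex.exp (2 * π * Complex.I * (k:ℂ)) = 1 := by
      have he : 2 * (π:ℂ) * Complex.I * (k:ℂ) = (k:ℂ) * (2 * π * Complex.I) := by ring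
      rw [he]
      exact Complex.exp_int_mul_two_pi_mul_I k
    rw [this, mul_one]
  constructor
  · -- Part A
    intro l hl
    exact partA (m+1) (fun s : ℝ => Complex.exp (2 * π * Complex.I * (k : ℂ) * (φ s : ℂ)))
      hF hFper l hl
  · -- Part B
    intro t ht
    set A : ℝ := ∑ j ∈ Finset.Icc (-(M₀:ℤ)) (M₀:ℤ), ‖c j‖ with hAdef
    set B : ℝ := 2*π*(M₀:ℝ) with hBdef
    have hA0 : 0 ≤ A := Finset.sum_nonneg fun _ _ => norm_nonneg _
    have hB0 : 0 ≤ B := by positivity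
    have hFnorm : ∀ s : ℝ, ‖Complex.exp (2 * π * Complex.I * (k : ℂ) * (φ s : ℂ))‖ = 1 := by
      intro s
      apply norm_cexp_eq_one _ (2*π*k*φ s)
      push_cast
      ring
    have hdF : deriv (fun s : ℝ => Complex.exp (2 * π * Complex.I * (k : ℂ) * (φ s : ℂ)))
        = fun s : ℝ => (2 * π * Complex.I * (k:ℂ)) *
          ((∑ j ∈ Finset.Icc (-(M₀:ℤ)) (M₀:ℤ), c j * Complex.exp (2*π*Complex.I*(j:ℂ)*(s:ℂ))) *
           Complex.exp (2 * π * Complex.I * (k : ℂ) * (φ s : ℂ))) := by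
      funext s
      have h3 := ((hgd s).const_mul (2 * π * Complex.I * (k:ℂ))).cexp
      rw [h3.deriv, ← hc s]
      ring
    have hkey := keyB (2 * π * Complex.I * (k:ℂ)) A B hA0 hB0 hψ hF
      (fun p s => psi_bound M₀ c p s) hFnorm hdF m t
    set K : ℝ := ‖(2 * π * Complex.I * (k:ℂ))‖ with hKdef
    have hKval : K = 2*π*|(k:ℝ)| := by
      rw [hKdef]
      simp [norm_mul, abs_of_pos Real.pi_pos]
    have hK0 : 0 ≤ K := norm_nonneg _
    -- arithmetic comparison
    set Ssum : ℝ := ∑ j ∈ Finset.Icc 1 (m+1),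
        |(k : ℝ)| ^ j * (M₀ : ℝ) ^ ((m+1) - j) * A ^ j with hSdef
    have hnn : ∀ (j : ℕ), 0 ≤ |(k : ℝ)| ^ j * (M₀ : ℝ) ^ ((m+1) - j) * A ^ j :=
      fun j => mul_nonneg (mul_nonneg (pow_nonneg (abs_nonneg _) _)
        (pow_nonneg (Nat.cast_nonneg _) _)) (pow_nonneg hA0 _)
    have hS0 : 0 ≤ Ssum := Finset.sum_nonneg fun j _ => hnn j
    have hsingle : ∀ j ∈ Finset.Icc 1 (m+1),
        |(k : ℝ)| ^ j * (M₀ : ℝ) ^ ((m+1) - j) * A ^ j ≤ Ssum :=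
      fun j hj => Finset.single_le_sum (f := fun j => |(k : ℝ)| ^ j * (M₀ : ℝ) ^ ((m+1) - j) * A ^ j)
        (fun i _ => hnn i) hj
    have hD0 : 0 ≤ max (K*A) B := le_max_of_le_right hB0
    have hcase : (K*A) * (max (K*A) B)^m ≤ (2*π)^(m+1) * Ssum := by
      rcases le_total B (K*A) with hBle | hKle
      · rw [max_eq_left hBle]
        have e2 : (K*A) * (K*A)^m = (2*π)^(m+1) *
            (|(k:ℝ)|^(m+1) * (M₀:ℝ)^((m+1)-(m+1)) * A^(m+1)) := by
          rw [Nat.sub_self, pow_zero, mul_one, ← pow_succ', hKval]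
          rw [mul_pow, mul_pow, mul_pow]
          ring
        rw [e2]
        refine mul_le_mul_of_nonneg_left ?_ (pow_nonneg (by positivity) (m+1))
        exact hsingle (m+1) (Finset.mem_Icc.mpr ⟨by omega, le_refl _⟩)
      · rw [max_eq_right hKle]
        have e2 : (K*A) * B^m = (2*π)^(m+1) *
            (|(k:ℝ)|^1 * (M₀:ℝ)^((m+1)-1) * A^1) := by
          rw [hKval, hBdef]
          have h4 : (m+1) - 1 = m := by omega
          rw [h4, pow_one, pow_one, mul_pow, pow_succ]
          ring
        rw [e2]
        refine mul_le_mul_of_nonneg_left ?_ (pow_nonneg (by positivity) (m+1))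
        exact hsingle 1 (Finset.mem_Icc.mpr ⟨le_refl _, by omega⟩)
    calc ‖iteratedDeriv (m+1) (fun s : ℝ =>
            Complex.exp (2 * π * Complex.I * (k : ℂ) * (φ s : ℂ))) t‖
        ≤ Caux (m+1) * (K * A) * (K * A + B)^m := hkey
      _ ≤ Caux (m+1) * (K * A) * (2 * max (K*A) B)^m := by
          refine mul_le_mul_of_nonneg_left
            (pow_le_pow_left₀ (by linarith [mul_nonneg hK0 hA0])  ?_ m)
            (mul_nonneg (Caux_pos _).le (mul_nonneg hK0 hA0))
          rcases le_total B (K*A) with h | h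
          · rw [max_eq_left h]; linarith
          · rw [max_eq_right h]; linarith [mul_nonneg hK0 hA0]
      _ = Caux (m+1) * 2^m * ((K * A) * (max (K*A) B)^m) := by
          rw [mul_pow]; ring
      _ ≤ Caux (m+1) * 2^m * ((2*π)^(m+1) * Ssum) := by
          refine mul_le_mul_of_nonneg_left hcase
            (mul_nonneg (Caux_pos _).le (pow_nonneg (by norm_num) m))
      _ ≤ Caux (m+1) * 2^(m+1) * (2*π)^(m+1) * Ssum := by
          have h5 : (2:ℝ)^m ≤ 2^(m+1) := by
            apply pow_le_pow_right₀ <;> norm_num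
          have h6 : (0:ℝ) < Caux (m+1) := Caux_pos _
          have h7 : (0:ℝ) ≤ (2*π)^(m+1) * Ssum :=
            mul_nonneg (pow_nonneg (by positivity) (m+1)) hS0
          calc Caux (m+1) * 2^m * ((2*π)^(m+1) * Ssum)
              = 2^m * (Caux (m+1) * ((2*π)^(m+1) * Ssum)) := by ring
            _ ≤ 2^(m+1) * (Caux (m+1) * ((2*π)^(m+1) * Ssum)) :=
                mul_le_mul_of_nonneg_right h5 (mul_nonneg h6.le h7)
            _ = Caux (m+1) * 2^(m+1) * (2*π)^(m+1) * Ssum := by ring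
end
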